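/- arXiv:2009.01045 — 8 statements merged into one kernel-verified Lean document; each statement's English description precedes it below -/
import Mathlib

section
/- Let G = H × K be a direct product of finite groups. If G has a normalizer covering, then σ_n(G) ≤ min{σ_n(H), σ_n(K)}. -/
open Subgroup

def IsNormCover {G : Type*} [Group G] (s : Finset (Subgroup G)) : Prop :=
  (∀ H ∈ s, ¬ H.Normal) ∧ ∀ g : G, ∃ H ∈ s, g ∈ Subgroup.normalizer (H : Set G)

noncomputable def sigmaN (G : Type*) [Group G] : ℕ∞ :=
  sInf {n : ℕ∞ | ∃ s : Finset (Subgroup G), IsNormCover s ∧ (s.card : ℕ∞) = n}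

lemma normalizer_prod_top {H K : Type*} [Group H] [Group K] (A : Subgroup H) (g : H × K) :
    g ∈ Subgroup.normalizer ((A.prod (⊤ : Subgroup K) : Subgroup (H × K)) : Set (H × K)) ↔
      g.1 ∈ Subgroup.normalizer (A : Set H) := by
  constructor
  · intro hg
    rw [mem_normalizer_iff] at hg ⊢
    intro h
    simpa [Subgroup.mem_prod] using hg (h, 1)
  · intro hg
    rw [mem_normalizer_iff] at hg ⊢
    intro x
    simp [Subgroup.mem_prod, hg x.1]

lemma normalizer_top_prod {H K : Type*} [Group H] [Group K] (B : Subgroup K) (g : H × K) :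
    g ∈ Subgroup.normalizer (((⊤ : Subgroup H).prod B : Subgroup (H × K)) : Set (H × K)) ↔
      g.2 ∈ Subgroup.normalizer (B : Set K) := by
  constructor
  · intro hg
    rw [mem_normalizer_iff] at hg ⊢
    intro h
    simpa [Subgroup.mem_prod] using hg (1, h)
  · intro hg
    rw [mem_normalizer_iff] at hg ⊢
    intro x
    simp [Subgroup.mem_prod, hg x.2]

lemma normal_of_prod_top {H K : Type*} [Group H] [Group K] {A : Subgroup H}
    (hn : (A.prod (⊤ : Subgroup K)).Normal) : A.Normal := by
  constructor
  intro a ha g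
  have := hn.conj_mem (a, 1) (by simp [Subgroup.mem_prod, ha]) (g, 1)
  simpa [Subgroup.mem_prod] using this

lemma normal_of_top_prod {H K : Type*} [Group H] [Group K] {B : Subgroup K}
    (hn : ((⊤ : Subgroup H).prod B).Normal) : B.Normal := by
  constructor
  intro b hb g
  have := hn.conj_mem (1, b) (by simp [Subgroup.mem_prod, hb]) (1, g)
  simpa [Subgroup.mem_prod] using this

lemma prod_top_injective {H K : Type*} [Group H] [Group K] :
    Function.Injective (fun A : Subgroup H => A.prod (⊤ : Subgroup K)) := by
  intro A B h
  ext a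
  have := SetLike.ext_iff.mp h (a, (1 : K))
  simpa [Subgroup.mem_prod] using this

lemma top_prod_injective {H K : Type*} [Group H] [Group K] :
    Function.Injective (fun B : Subgroup K => (⊤ : Subgroup H).prod B) := by
  intro A B h
  ext b
  have := SetLike.ext_iff.mp h ((1 : H), b)
  simpa [Subgroup.mem_prod] using this

lemma sigmaN_prod_le_left {H K : Type*} [Group H] [Group K] :
    sigmaN (H × K) ≤ sigmaN H := by
  classical
  refine le_sInf ?_
  rintro n ⟨s, ⟨hns, hcv⟩, hcard⟩
  refine sInf_le ⟨s.image (fun A => A.prod (⊤ : Subgroup K)), ⟨?_, ?_⟩, ?_⟩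
  · intro P hP
    simp only [Finset.mem_image] at hP
    obtain ⟨A, hA, rfl⟩ := hP
    exact fun h => hns A hA (normal_of_prod_top h)
  · intro g
    obtain ⟨A, hA, hgA⟩ := hcv g.1
    exact ⟨A.prod ⊤, Finset.mem_image_of_mem _ hA, (normalizer_prod_top A g).mpr hgA⟩
  · rw [Finset.card_image_of_injective _ prod_top_injective, hcard]

lemma sigmaN_prod_le_right {H K : Type*} [Group H] [Group K] :
    sigmaN (H × K) ≤ sigmaN K := by
  classical
  refine le_sInf ?_
  rintro n ⟨s, ⟨hns, hcv⟩, hcard⟩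
  refine sInf_le ⟨s.image (fun B => (⊤ : Subgroup H).prod B), ⟨?_, ?_⟩, ?_⟩
  · intro P hP
    simp only [Finset.mem_image] at hP
    obtain ⟨B, hB, rfl⟩ := hP
    exact fun h => hns B hB (normal_of_top_prod h)
  · intro g
    obtain ⟨B, hB, hgB⟩ := hcv g.2
    exact ⟨(⊤ : Subgroup H).prod B, Finset.mem_image_of_mem _ hB,
      (normalizer_top_prod B g).mpr hgB⟩
  · rw [Finset.card_image_of_injective _ top_prod_injective, hcard]

theorem stmt2 {H K : Type*} [Group H] [Group K] [Finite H] [Finite K]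
    (hcov : ∃ s : Finset (Subgroup (H × K)), IsNormCover s) :
    sigmaN (H × K) ≤ min (sigmaN H) (sigmaN K) := by
  exact le_min sigmaN_prod_le_left sigmaN_prod_le_right
end

section
/- Let G = H × K be a direct product of finite groups with gcd(|H|,|K|) = 1, and suppose G has a normalizer covering. Then σ_n(G) = min{σ_n(H), σ_n(K)}. -/
open Subgroup

section Aux

variable {H K : Type*} [Group H] [Group K]

lemma mem_normalizer_prod (A : Subgroup H) (B : Subgroup K) (x : H × K) :
    x ∈ Subgroup.normalizer ((A.prod B : Subgroup (H × K)) : Set (H × K)) ↔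
      x.1 ∈ Subgroup.normalizer (A : Set H) ∧ x.2 ∈ Subgroup.normalizer (B : Set K) := by
  simp only [Subgroup.mem_normalizer_iff, Subgroup.mem_prod, Prod.forall, Prod.mul_def,
    Prod.fst_inv, Prod.snd_inv]
  constructor
  · intro h
    refine ⟨fun a => ?_, fun b => ?_⟩
    · have := h a 1; simpa [one_mem] using this
    · have := h 1 b; simpa [one_mem] using this
  · rintro ⟨h1, h2⟩ a b
    rw [h1 a, h2 b]

lemma normal_fst {A : Subgroup H} {B : Subgroup K}
    (h : (A.prod B).Normal) : A.Normal := by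
  constructor
  intro a ha g
  have := h.conj_mem (a, 1) (Subgroup.mem_prod.2 ⟨ha, B.one_mem⟩) (g, 1)
  rw [Subgroup.mem_prod] at this
  simpa using this.1

lemma normal_snd {A : Subgroup H} {B : Subgroup K} (h : (A.prod B).Normal) : B.Normal := by
  constructor
  intro b hb g
  have := h.conj_mem (1, b) (Subgroup.mem_prod.2 ⟨A.one_mem, hb⟩) (1, g)
  rw [Subgroup.mem_prod] at this
  simpa using this.2

lemma exists_pow_pow_eq (h : H) {n : ℕ} (hcop : Nat.Coprime n (orderOf h))
    (hn : 0 < n) : ∃ m : ℕ, (h ^ n) ^ m = h := by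
  refine ⟨n ^ (Nat.totient (orderOf h) - 1), ?_⟩
  rw [← pow_mul]
  by_cases hd : orderOf h = 0
  · -- infinite order: then coprime n 0 means n = 1
    have : n = 1 := by simpa [hd, Nat.coprime_zero_right] using hcop
    simp [this]
  · have hdpos : 0 < orderOf h := Nat.pos_of_ne_zero hd
    have htot : 0 < Nat.totient (orderOf h) := Nat.totient_pos.2 hdpos
    have : n * n ^ (Nat.totient (orderOf h) - 1) = n ^ Nat.totient (orderOf h) := by
      rw [← pow_succ']
      congr 1
      omega
    rw [this]
    have := Nat.ModEq.pow_totient hcop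
    calc h ^ n ^ Nat.totient (orderOf h) = h ^ 1 := by
          rw [pow_eq_pow_iff_modEq]; exact this
      _ = h := pow_one h

variable [Finite H] [Finite K]

lemma prod_decomp (hcop : Nat.Coprime (Nat.card H) (Nat.card K)) (L : Subgroup (H × K)) :
    L = (L.map (MonoidHom.fst H K)).prod (L.map (MonoidHom.snd H K)) := by
  have hHpos : 0 < Nat.card H := Nat.card_pos
  have hKpos : 0 < Nat.card K := Nat.card_pos
  have key₁ : ∀ x : H × K, x ∈ L → (x.1, (1 : K)) ∈ L := by
    rintro ⟨h, k⟩ hx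
    have h1 : ((h, k) : H × K) ^ (Nat.card K) ∈ L := L.pow_mem hx _
    have h2 : ((h, k) : H × K) ^ (Nat.card K) = (h ^ (Nat.card K), 1) := by
      rw [Prod.pow_mk]
      congr 1
      exact pow_card_eq_one'
    rw [h2] at h1
    have hc : Nat.Coprime (Nat.card K) (orderOf h) :=
      (Nat.Coprime.coprime_dvd_left (orderOf_dvd_natCard h) hcop).symm
    obtain ⟨m, hm⟩ := exists_pow_pow_eq h hc hKpos
    have h3 : ((h ^ Nat.card K, (1 : K)) : H × K) ^ m ∈ L := L.pow_mem h1 _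
    have h4 : ((h ^ Nat.card K, (1 : K)) : H × K) ^ m = (h, 1) := by
      rw [Prod.pow_mk, hm, one_pow]
    rwa [h4] at h3
  have key₂ : ∀ x : H × K, x ∈ L → ((1 : H), x.2) ∈ L := by
    rintro ⟨h, k⟩ hx
    have h1 : ((h, k) : H × K) ^ (Nat.card H) ∈ L := L.pow_mem hx _
    have h2 : ((h, k) : H × K) ^ (Nat.card H) = (1, k ^ (Nat.card H)) := by
      rw [Prod.pow_mk]
      congr 1
      exact pow_card_eq_one'
    rw [h2] at h1
    have hc : Nat.Coprime (Nat.card H) (orderOf k) :=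
      (Nat.Coprime.coprime_dvd_left (orderOf_dvd_natCard k) hcop.symm).symm
    obtain ⟨m, hm⟩ := exists_pow_pow_eq k hc hHpos
    have h3 : (((1 : H), k ^ Nat.card H) : H × K) ^ m ∈ L := L.pow_mem h1 _
    have h4 : (((1 : H), k ^ Nat.card H) : H × K) ^ m = (1, k) := by
      rw [Prod.pow_mk, hm, one_pow]
    rwa [h4] at h3
  apply le_antisymm
  · rintro ⟨h, k⟩ hx
    exact ⟨⟨(h, k), hx, rfl⟩, ⟨(h, k), hx, rfl⟩⟩
  · rintro ⟨h, k⟩ ⟨⟨x, hxL, hx1⟩, ⟨y, hyL, hy2⟩⟩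
    have ex : x.1 = h := hx1
    have ey : y.2 = k := hy2
    have p1 : ((h, (1 : K)) : H × K) ∈ L := by
      have := key₁ x hxL; rwa [ex] at this
    have p2 : (((1 : H), k) : H × K) ∈ L := by
      have := key₂ y hyL; rwa [ey] at this
    have := L.mul_mem p1 p2
    simpa using this

end Aux

theorem stmt3 {H K : Type*} [Group H] [Group K] [Finite H] [Finite K]
    (hcop : Nat.Coprime (Nat.card H) (Nat.card K))
    (hcov : ∃ s : Finset (Subgroup (H × K)), IsNormCover s) :
    sigmaN (H × K) = min (sigmaN H) (sigmaN K) := by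
  classical
  apply le_antisymm
  · -- sigmaN (H × K) ≤ min
    apply le_min
    · -- ≤ sigmaN H
      apply le_sInf
      rintro n ⟨s, ⟨hnn, hcv⟩, hcard⟩
      rw [← hcard]
      refine le_trans (sInf_le ⟨s.image (fun A => A.prod (⊤ : Subgroup K)), ⟨?_, ?_⟩, rfl⟩)
        (by exact_mod_cast Finset.card_image_le)
      · rintro L hL
        obtain ⟨A, hA, rfl⟩ := Finset.mem_image.1 hL
        intro hnorm
        exact hnn A hA (normal_fst hnorm)
      · rintro ⟨h, k⟩
        obtain ⟨A, hA, hmem⟩ := hcv h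
        refine ⟨A.prod ⊤, Finset.mem_image_of_mem _ hA, ?_⟩
        rw [mem_normalizer_prod]
        exact ⟨hmem, by simp [Subgroup.mem_normalizer_iff, Subgroup.mem_set_normalizer_iff]⟩
    · -- ≤ sigmaN K
      apply le_sInf
      rintro n ⟨s, ⟨hnn, hcv⟩, hcard⟩
      rw [← hcard]
      refine le_trans (sInf_le ⟨s.image (fun B => (⊤ : Subgroup H).prod B), ⟨?_, ?_⟩, rfl⟩)
        (by exact_mod_cast Finset.card_image_le)
      · rintro L hL
        obtain ⟨B, hB, rfl⟩ := Finset.mem_image.1 hL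
        intro hnorm
        exact hnn B hB (normal_snd hnorm)
      · rintro ⟨h, k⟩
        obtain ⟨B, hB, hmem⟩ := hcv k
        refine ⟨(⊤ : Subgroup H).prod B, Finset.mem_image_of_mem _ hB, ?_⟩
        rw [mem_normalizer_prod]
        exact ⟨by simp [Subgroup.mem_normalizer_iff, Subgroup.mem_set_normalizer_iff], hmem⟩
  · -- min ≤ sigmaN (H × K)
    apply le_sInf
    rintro n ⟨s, ⟨hnn, hcv⟩, hcard⟩
    by_cases hk : ∀ k : K, ∃ L ∈ s, ¬(L.map (MonoidHom.snd H K)).Normal ∧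
        k ∈ Subgroup.normalizer ((L.map (MonoidHom.snd H K) : Subgroup K) : Set K)
    · -- K side covered
      refine le_trans (min_le_right _ _) ?_
      rw [← hcard]
      refine le_trans (sInf_le ⟨(s.image (fun L => L.map (MonoidHom.snd H K))).filter
          (fun B => ¬ B.Normal), ⟨?_, ?_⟩, rfl⟩)
        (by exact_mod_cast le_trans (Finset.card_filter_le _ _) Finset.card_image_le)
      · intro B hB; exact (Finset.mem_filter.1 hB).2
      · intro g
        obtain ⟨L, hL, hBn, hmem⟩ := hk g
        exact ⟨L.map (MonoidHom.snd H K),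
          Finset.mem_filter.2 ⟨Finset.mem_image_of_mem _ hL, hBn⟩, hmem⟩
    · push_neg at hk
      obtain ⟨k, hkbad⟩ := hk
      have hh : ∀ h : H, ∃ L ∈ s, ¬(L.map (MonoidHom.fst H K)).Normal ∧
          h ∈ Subgroup.normalizer ((L.map (MonoidHom.fst H K) : Subgroup H) : Set H) := by
        intro h
        obtain ⟨L, hL, hmem⟩ := hcv (h, k)
        have hdec := prod_decomp hcop L
        rw [hdec, mem_normalizer_prod] at hmem
        obtain ⟨hm1, hm2⟩ := hmem
        have hBnorm : (L.map (MonoidHom.snd H K)).Normal := by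
          by_contra hB
          exact hkbad L hL hB hm2
        refine ⟨L, hL, ?_, hm1⟩
        intro hAnorm
        apply hnn L hL
        rw [hdec]
        exact @Subgroup.prod_normal _ _ _ _ _ _ hAnorm hBnorm
      refine le_trans (min_le_left _ _) ?_
      rw [← hcard]
      refine le_trans (sInf_le ⟨(s.image (fun L => L.map (MonoidHom.fst H K))).filter
          (fun B => ¬ B.Normal), ⟨?_, ?_⟩, rfl⟩)
        (by exact_mod_cast le_trans (Finset.card_filter_le _ _) Finset.card_image_le)
      · intro B hB; exact (Finset.mem_filter.1 hB).2
      · intro g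
        obtain ⟨L, hL, hAn, hmem⟩ := hh g
        exact ⟨L.map (MonoidHom.fst H K),
          Finset.mem_filter.2 ⟨Finset.mem_image_of_mem _ hL, hAn⟩, hmem⟩
end

section
/- A finite group G has a normalizer covering if and only if the Fitting subgroup Fit(G) is contained in a union of finitely many proper normalizers of subgroups of G, i.e., Fit(G) ⊆ ⋃_{i=1}^m N_G(H_i) where each H_i is a non-normal subgroup of G. -/
open Subgroup

/-- The Fitting subgroup: the join of all nilpotent normal subgroups. -/
def fittingSubgroup (G : Type*) [Group G] : Subgroup G :=
  ⨆ (H : Subgroup G) (_ : H.Normal ∧ Group.IsNilpotent H), H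

lemma zpowers_le_fitting {G : Type*} [Group G] {b : G}
    (h : (zpowers b).Normal) : zpowers b ≤ fittingSubgroup G := by
  have : Group.IsNilpotent (zpowers b) := by
    have : IsCyclic (zpowers b) := ⟨⟨⟨b, mem_zpowers b⟩, fun x => by
      obtain ⟨n, hn⟩ := x.2
      exact ⟨n, Subtype.ext (by simpa using hn)⟩⟩⟩
    exact @CommGroup.isNilpotent _ IsCyclic.commGroup
  calc zpowers b ≤ ⨆ (_ : (zpowers b).Normal ∧ Group.IsNilpotent (zpowers b)),
        zpowers b := le_iSup_of_le ⟨h, this⟩ le_rfl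
    _ ≤ fittingSubgroup G := le_iSup (fun H : Subgroup G =>
        ⨆ (_ : H.Normal ∧ Group.IsNilpotent H), H) (zpowers b)

theorem stmt4 {G : Type*} [Group G] [Finite G] :
    (∃ s : Finset (Subgroup G), IsNormCover s) ↔
      ∃ s : Finset (Subgroup G), (∀ H ∈ s, ¬ H.Normal) ∧
        ∀ g ∈ fittingSubgroup G, ∃ H ∈ s, g ∈ Subgroup.normalizer (H : Set G) := by
  classical
  have := Fintype.ofFinite G
  constructor
  · rintro ⟨s, hs1, hs2⟩
    exact ⟨s, hs1, fun g _ => hs2 g⟩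
  · rintro ⟨s, hs1, hs2⟩
    set t : Finset (Subgroup G) :=
      (Finset.univ.filter (fun b : G => b ∉ fittingSubgroup G)).image
        (fun b => zpowers b) with ht
    refine ⟨s ∪ t, ?_, ?_⟩
    · intro H hH
      rcases Finset.mem_union.1 hH with h | h
      · exact hs1 H h
      · simp only [ht, Finset.mem_image, Finset.mem_filter] at h
        obtain ⟨b, ⟨_, hb⟩, rfl⟩ := h
        intro hn
        exact hb (zpowers_le_fitting hn (mem_zpowers b))
    · intro g
      by_cases hg : g ∈ fittingSubgroup G
      · obtain ⟨H, hH, hgH⟩ := hs2 g hg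
        exact ⟨H, Finset.mem_union_left _ hH, hgH⟩
      · refine ⟨zpowers g, Finset.mem_union_right _ ?_, ?_⟩
        · simp only [ht, Finset.mem_image, Finset.mem_filter]
          exact ⟨g, ⟨Finset.mem_univ g, hg⟩, rfl⟩
        · exact le_normalizer (mem_zpowers g)
end

section
/- Let G be a finite 2-group with Z(G) ≤ Φ(G) having no normalizer covering. Then G has a subgroup M such that (1) G' ≤ M, (2) every subgroup of M is normal in G, and (3) there exist y, z ∈ G with G = M⟨y⟩⟨z⟩. -/
open Subgroup

section Aux
open Finset

lemma cyclic_of_few_sqrts {H : Type*} [CommGroup H] [Finite H] (hp : IsPGroup 2 H)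
    (hw : ∃ w : H, ∀ x : H, x ^ 2 = 1 → x = 1 ∨ x = w) : IsCyclic H := by
  classical
  obtain ⟨w, hw⟩ := hw
  haveI := Fintype.ofFinite H
  haveI : Fact (Nat.Prime 2) := ⟨Nat.prime_two⟩
  apply isCyclic_of_card_pow_eq_one_le
  have key : ∀ k : ℕ, (univ.filter fun a : H => a ^ (2 ^ k) = 1).card ≤ 2 ^ k := by
    intro k
    induction k with
    | zero =>
      simpa using Finset.card_le_card (fun a ha => by
        simp only [mem_filter, pow_one] at ha
        simpa using ha.2 : (univ.filter fun a : H => a ^ (2 ^ 0) = 1) ⊆ {1})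
    | succ k ih =>
      set S := univ.filter fun a : H => a ^ (2 ^ (k+1)) = 1 with hS
      have himg : S.image (fun a => a ^ 2) ⊆ univ.filter fun a : H => a ^ (2 ^ k) = 1 := by
        intro b hb
        obtain ⟨a, ha, rfl⟩ := Finset.mem_image.mp hb
        simp only [hS, mem_filter] at ha ⊢
        refine ⟨mem_univ _, ?_⟩
        rw [← pow_mul]
        rw [show 2 * 2 ^ k = 2 ^ (k+1) by ring]
        exact ha.2
      have hcard : S.card ≤ 2 * (S.image (fun a => a ^ 2)).card := by
        apply Finset.card_le_mul_card_image
        intro b hb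
        obtain ⟨x0, hx0, hx0b⟩ := Finset.mem_image.mp hb
        have : S.filter (fun a => a ^ 2 = b) ⊆ {x0, w * x0} := by
          intro x hx
          simp only [mem_filter] at hx
          have : (x * x0⁻¹) ^ 2 = 1 := by
            rw [mul_pow, hx.2, ← hx0b, inv_pow, mul_inv_cancel]
          rcases hw _ this with h | h
          · have : x = x0 := by
              have := mul_inv_eq_one.mp h; simpa using this
            simp [this]
          · have : x = w * x0 := by
              rw [← h]; group
            simp [this]
        calc (S.filter (fun a => a ^ 2 = b)).card ≤ ({x0, w * x0} : Finset H).card :=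
              Finset.card_le_card this
          _ ≤ 2 := Finset.card_insert_le _ _ |>.trans (by simp)
      calc S.card ≤ 2 * (S.image (fun a => a ^ 2)).card := hcard
        _ ≤ 2 * (univ.filter fun a : H => a ^ (2 ^ k) = 1).card :=
            Nat.mul_le_mul_left _ (Finset.card_le_card himg)
        _ ≤ 2 * 2 ^ k := Nat.mul_le_mul_left _ ih
        _ = 2 ^ (k+1) := by ring
  intro n hn
  set k := n.factorization 2 with hk
  have hsub : (univ.filter fun a : H => a ^ n = 1) ⊆ univ.filter fun a : H => a ^ (2 ^ k) = 1 := by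
    intro x hx
    simp only [mem_filter] at hx ⊢
    refine ⟨mem_univ _, ?_⟩
    obtain ⟨j, hj⟩ := IsPGroup.iff_orderOf.mp hp x
    have h1 : orderOf x ∣ n := orderOf_dvd_of_pow_eq_one hx.2
    have h2 : (2:ℕ) ^ j ∣ n := hj ▸ h1
    have h3 : j ≤ k := (Nat.Prime.pow_dvd_iff_le_factorization Nat.prime_two hn.ne').mp h2
    have : orderOf x ∣ 2 ^ k := hj ▸ pow_dvd_pow 2 h3
    exact orderOf_dvd_iff_pow_eq_one.mp this
  calc (univ.filter fun a : H => a ^ n = 1).card ≤ (univ.filter fun a : H => a ^ (2^k) = 1).card :=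
        Finset.card_le_card hsub
    _ ≤ 2 ^ k := key k
    _ ≤ n := Nat.ordProj_le 2 hn.ne'


lemma sqrt_val (d : ℕ) (hdvd : (4:ℕ) ∣ 2 ^ (d+3)) (x : ZMod (2 ^ (d+3)))
    (h2 : x ^ 2 = 1) (h4 : ZMod.castHom hdvd (ZMod 4) x = 1) :
    x = 1 ∨ x = 1 + 2 ^ (d+2) := by
  haveI : NeZero (2 ^ (d+3)) := ⟨by positivity⟩
  set a : ℤ := (x.val : ℤ) with ha
  have hax : ((a : ℤ) : ZMod (2 ^ (d+3))) = x := by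
    rw [ha]; push_cast
    rw [ZMod.natCast_val, ZMod.cast_id]
  have h1 : (2:ℤ) ^ (d+3) ∣ a ^ 2 - 1 := by
    have : ((a ^ 2 - 1 : ℤ) : ZMod (2 ^ (d+3))) = 0 := by
      push_cast [hax, h2]; ring
    have := (ZMod.intCast_zmod_eq_zero_iff_dvd _ _).mp this
    exact_mod_cast this
  have h2' : (4:ℤ) ∣ a - 1 := by
    have hcast : ((a : ℤ) : ZMod 4) = 1 := by
      have := map_intCast (ZMod.castHom hdvd (ZMod 4)) a
      rw [hax] at this
      rw [← this, h4]
    have : ((a - 1 : ℤ) : ZMod 4) = 0 := by push_cast [hcast]; ring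
    have := (ZMod.intCast_zmod_eq_zero_iff_dvd _ _).mp this
    exact_mod_cast this
  obtain ⟨t, ht⟩ := h2'
  have ha1 : a = 4 * t + 1 := by linarith
  have h8 : (8:ℤ) * 2 ^ d ∣ 8 * (t * (2 * t + 1)) := by
    have : a ^ 2 - 1 = 8 * (t * (2 * t + 1)) := by rw [ha1]; ring
    rw [← this]
    have : (2:ℤ) ^ (d+3) = 8 * 2 ^ d := by ring
    rw [← this]; exact h1
  have hdt : (2:ℤ) ^ d ∣ t * (2 * t + 1) :=
    (mul_dvd_mul_iff_left (by norm_num : (8:ℤ) ≠ 0)).mp h8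
  have hcop : IsCoprime ((2:ℤ) ^ d) (2 * t + 1) := by
    exact IsCoprime.pow_left ⟨-t, 1, by ring⟩
  have hts : (2:ℤ) ^ d ∣ t := hcop.dvd_of_dvd_mul_right hdt
  obtain ⟨s, hs⟩ := hts
  have hxval : x = 1 + ((2:ℤ) ^ (d+2) * s : ℤ) := by
    rw [← hax, ha1, hs]; push_cast; ring
  have hpow0 : (((2:ℤ) ^ (d+3) : ℤ) : ZMod (2 ^ (d+3))) = 0 := by
    rw [show ((2:ℤ) ^ (d+3)) = ((2 ^ (d+3) : ℕ) : ℤ) by push_cast; ring]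
    rw [ZMod.intCast_zmod_eq_zero_iff_dvd]
  rcases Int.even_or_odd s with ⟨q, hq⟩ | ⟨q, hq⟩
  · left
    rw [hxval, hq]
    have : ((2:ℤ) ^ (d+2) * (q + q) : ℤ) = (2 ^ (d+3) : ℤ) * q := by ring
    rw [this, Int.cast_mul, hpow0, zero_mul, add_zero]
  · right
    rw [hxval, hq]
    have : ((2:ℤ) ^ (d+2) * (2 * q + 1) : ℤ) = (2 ^ (d+3) : ℤ) * q + 2 ^ (d+2) := by ring
    rw [this, Int.cast_add, Int.cast_mul, hpow0, zero_mul, zero_add]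
    norm_cast

lemma small_cyclic {H : Type*} [Group H] [Finite H] (h : Nat.card H ≤ 2) : IsCyclic H := by
  haveI : Fact (Nat.Prime 2) := ⟨Nat.prime_two⟩
  have hpos : 0 < Nat.card H := Nat.card_pos
  interval_cases h' : Nat.card H
  · haveI : Subsingleton H := (Nat.card_eq_one_iff_unique.mp h').1
    infer_instance
  · exact isCyclic_of_prime_card h'

lemma ker_cyclic (d : ℕ) (hdvd : (4:ℕ) ∣ 2 ^ (d+3)) :
    IsCyclic ((Units.map (ZMod.castHom hdvd (ZMod 4)).toMonoidHom).ker) := by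
  classical
  haveI : NeZero (2 ^ (d+3)) := ⟨by positivity⟩
  set K := (Units.map (ZMod.castHom hdvd (ZMod 4)).toMonoidHom).ker with hK
  have valfact : ∀ x : ↥K, x ^ 2 = 1 → x ≠ 1 →
      ((x : (ZMod (2^(d+3)))ˣ) : ZMod (2^(d+3))) = 1 + 2 ^ (d+2) := by
    intro x hx hne
    have h2 : ((x : (ZMod (2^(d+3)))ˣ) : ZMod (2^(d+3))) ^ 2 = 1 := by
      have h1 : ((x : (ZMod (2^(d+3)))ˣ) : ZMod (2^(d+3)))^2
          = (((x^2 : ↥K) : (ZMod (2^(d+3)))ˣ) : ZMod (2^(d+3))) := by push_cast; ring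
      rw [h1, hx]; push_cast; ring
    have h4 : ZMod.castHom hdvd (ZMod 4) ((x : (ZMod (2^(d+3)))ˣ) : ZMod (2^(d+3))) = 1 := by
      have hk : Units.map (ZMod.castHom hdvd (ZMod 4)).toMonoidHom
          (x : (ZMod (2^(d+3)))ˣ) = 1 := x.2
      have := congrArg Units.val hk
      simpa using this
    rcases sqrt_val d hdvd _ h2 h4 with h | h
    · exact absurd (Subtype.ext (Units.ext h)) hne
    · exact h
  apply cyclic_of_few_sqrts
  · have hcard : Nat.card (ZMod (2^(d+3)))ˣ = 2 ^ (d+2) := by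
      rw [Nat.card_eq_fintype_card, ZMod.card_units_eq_totient,
        Nat.totient_prime_pow Nat.prime_two (by omega)]
      simp
    exact (IsPGroup.of_card hcard).to_subgroup _
  · by_cases hex : ∃ x0 : ↥K, x0 ^ 2 = 1 ∧ x0 ≠ 1
    · obtain ⟨x0, hx01, hx0ne⟩ := hex
      refine ⟨x0, fun x hx => ?_⟩
      by_cases hxe : x = 1
      · exact Or.inl hxe
      · exact Or.inr (Subtype.ext (Units.ext ((valfact x hx hxe).trans (valfact x0 hx01 hx0ne).symm)))
    · exact ⟨1, fun x hx => Or.inl (by by_contra h; exact hex ⟨x, hx, h⟩)⟩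


lemma split_lemma {G U V : Type*} [Group G] [CommGroup U] [Group V]
    (Φ : G →* U) (f : U →* V) (hV : IsCyclic V) (hker : IsCyclic f.ker) :
    ∃ y z : G, ∀ g : G, ∃ m ∈ Φ.ker, ∃ i j : ℤ, g = m * y ^ i * z ^ j := by
  haveI := hV
  haveI := hker
  obtain ⟨v, hv⟩ := IsCyclic.exists_generator (α := (f.comp Φ).range)
  obtain ⟨y, hy⟩ : ∃ y : G, f (Φ y) = (v : V) := by
    obtain ⟨g, hg⟩ := v.2
    exact ⟨g, hg⟩
  set W := Φ.range ⊓ f.ker with hW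
  haveI : IsCyclic ↥W :=
    isCyclic_of_surjective (subgroupOfEquivOfLe (inf_le_right : W ≤ f.ker))
      (subgroupOfEquivOfLe _).surjective
  obtain ⟨w, hw⟩ := IsCyclic.exists_generator (α := ↥W)
  obtain ⟨z, hz⟩ : ∃ z : G, Φ z = (w : U) := by
    have : (w : U) ∈ Φ.range := w.2.1
    exact this
  refine ⟨z, y, fun g => ?_⟩
  have hmem : f (Φ g) ∈ (f.comp Φ).range := ⟨g, rfl⟩
  obtain ⟨i, hi⟩ := mem_zpowers_iff.mp (hv ⟨f (Φ g), hmem⟩)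
  have hi' : (v : V) ^ i = f (Φ g) := by
    have := congrArg (Subtype.val) hi
    simpa using this
  have huW : Φ (g * y ^ (-i)) ∈ W := by
    constructor
    · exact ⟨g * y ^ (-i), rfl⟩
    · have : f (Φ (g * y ^ (-i))) = 1 := by
        rw [map_mul, map_mul, map_zpow, map_zpow, hy, ← hi']
        group
      exact this
  obtain ⟨j, hj⟩ := mem_zpowers_iff.mp (hw ⟨Φ (g * y ^ (-i)), huW⟩)
  have hj' : (w : U) ^ j = Φ (g * y ^ (-i)) := by
    have := congrArg (Subtype.val) hj
    simpa using this
  refine ⟨g * y ^ (-i) * z ^ (-j), ?_, j, i, by group⟩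
  have : Φ (g * y ^ (-i) * z ^ (-j)) = 1 := by
    rw [map_mul, map_zpow, hz, ← hj']
    group
  exact this

lemma units_twogen {G : Type*} [Group G] (N : ℕ) (hN : ∃ k, N = 2 ^ k)
    (Φ : G →* (ZMod N)ˣ) :
    ∃ y z : G, ∀ g : G, ∃ m ∈ Φ.ker, ∃ i j : ℤ, g = m * y ^ i * z ^ j := by
  obtain ⟨k, rfl⟩ := hN
  rcases lt_or_ge k 3 with hk | hk
  · -- small case: (ZMod 2^k)ˣ is itself cyclic
    haveI : NeZero (2 ^ k) := ⟨by positivity⟩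
    have hcyc : IsCyclic (ZMod (2 ^ k))ˣ := by
      apply small_cyclic
      rw [Nat.card_eq_fintype_card, ZMod.card_units_eq_totient]
      interval_cases k <;> decide
    exact split_lemma Φ (MonoidHom.id _) hcyc inferInstance
  · obtain ⟨d, rfl⟩ : ∃ d, k = d + 3 := ⟨k - 3, by omega⟩
    have hdvd : (4:ℕ) ∣ 2 ^ (d+3) := ⟨2 ^ (d+1), by ring⟩
    have hV : IsCyclic (ZMod 4)ˣ := by
      apply small_cyclic
      rw [Nat.card_eq_fintype_card, ZMod.card_units_eq_totient]
      decide
    exact split_lemma Φ (Units.map (ZMod.castHom hdvd (ZMod 4)).toMonoidHom) hV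
      (ker_cyclic d hdvd)

end Aux

theorem stmt8 {G : Type*} [Group G] [Finite G] (hpG : IsPGroup 2 G)
    (hZ : Subgroup.center G ≤ frattini G)
    (hnc : ¬ ∃ s : Finset (Subgroup G), IsNormCover s) :
    ∃ M : Subgroup G, commutator G ≤ M ∧
      (∀ K : Subgroup G, K ≤ M → K.Normal) ∧
      ∃ y z : G, ∀ g : G, ∃ m ∈ M, ∃ i j : ℤ, g = m * y ^ i * z ^ j := by
  classical
  haveI : Fact (Nat.Prime 2) := ⟨Nat.prime_two⟩
  haveI := Fintype.ofFinite (Subgroup G)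
  set s : Finset (Subgroup G) := Finset.univ.filter (fun H => ¬ H.Normal) with hs
  have cond1 : ∀ H ∈ s, ¬ H.Normal := fun H hH => (Finset.mem_filter.mp hH).2
  have h2 : ¬ ∀ g : G, ∃ H ∈ s, g ∈ Subgroup.normalizer (H : Set G) := fun h => hnc ⟨s, cond1, h⟩
  push_neg at h2
  obtain ⟨g0, hg0⟩ := h2
  have hkey : ∀ K : Subgroup G, g0 ∈ Subgroup.normalizer (K : Set G) → K.Normal := by
    intro K hm
    by_contra hn
    exact hg0 K (Finset.mem_filter.mpr ⟨Finset.mem_univ _, hn⟩) hm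
  have hZn : (zpowers g0).Normal := hkey _ (le_normalizer (mem_zpowers g0))
  have hconj : ∀ x : G, ∃ m : ℤ, x * g0 * x⁻¹ = g0 ^ m := by
    intro x
    obtain ⟨m, hm⟩ := mem_zpowers_iff.mp (hZn.conj_mem g0 (mem_zpowers g0) x)
    exact ⟨m, hm.symm⟩
  choose eexp hexp using hconj
  have hcast : ∀ a b : ℤ, g0 ^ a = g0 ^ b ↔
      ((a : ZMod (orderOf g0)) = (b : ZMod (orderOf g0))) := by
    intro a b
    rw [ZMod.intCast_eq_intCast_iff, Int.modEq_iff_dvd, orderOf_dvd_iff_zpow_eq_one,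
      zpow_sub, mul_inv_eq_one, eq_comm]
  let φ : G →* ZMod (orderOf g0) :=
    { toFun := fun x => ((eexp x : ℤ) : ZMod (orderOf g0))
      map_one' := by
        have h1 : g0 ^ eexp 1 = g0 ^ (1:ℤ) := by
          rw [← hexp 1]; group
        have := (hcast _ _).mp h1
        simpa using this
      map_mul' := by
        intro x y
        have h1 : g0 ^ eexp (x * y) = g0 ^ (eexp x * eexp y) := by
          rw [← hexp (x*y)]
          have hxy : x * y * g0 * (x*y)⁻¹ = x * (y * g0 * y⁻¹) * x⁻¹ := by group
          rw [hxy, hexp y, ← conj_zpow, hexp x, ← zpow_mul]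
        have := (hcast _ _).mp h1
        push_cast at this ⊢
        exact this }
  set Φ : G →* (ZMod (orderOf g0))ˣ := φ.toHomUnits with hΦ
  have memker : ∀ x : G, x ∈ Φ.ker ↔ x * g0 * x⁻¹ = g0 := by
    intro x
    rw [MonoidHom.mem_ker, Units.ext_iff]
    have hco : ((Φ x : (ZMod (orderOf g0))ˣ) : ZMod (orderOf g0)) = φ x :=
      MonoidHom.coe_toHomUnits φ x
    rw [hco, Units.val_one]
    show ((eexp x : ℤ) : ZMod (orderOf g0)) = 1 ↔ _
    rw [hexp x, show (1 : ZMod (orderOf g0)) = ((1:ℤ) : ZMod (orderOf g0)) by push_cast; rfl,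
      ← hcast, zpow_one]
  refine ⟨Φ.ker, Abelianization.commutator_subset_ker Φ, ?_, ?_⟩
  · intro K hK
    apply hkey
    rw [mem_normalizer_iff]
    intro h
    constructor
    · intro hh
      have hc := (memker h).mp (hK hh)
      have comm : h * g0 = g0 * h := by
        have := congrArg (· * h) hc
        simpa [mul_assoc] using this
      have he : g0 * h * g0⁻¹ = h := by
        rw [← comm]; group
      rw [he]; exact hh
    · intro hh
      have hc := (memker _).mp (hK hh)
      have comm : (g0 * h * g0⁻¹) * g0 = g0 * (g0 * h * g0⁻¹) := by
        have := congrArg (· * (g0 * h * g0⁻¹)) hc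
        simpa [mul_assoc] using this
      have he : h = g0 * h * g0⁻¹ := by
        calc h = g0⁻¹ * ((g0 * h * g0⁻¹) * g0) := by group
          _ = g0⁻¹ * (g0 * (g0 * h * g0⁻¹)) := by rw [comm]
          _ = g0 * h * g0⁻¹ := by group
      rw [he]; exact hh
  · exact units_twogen (orderOf g0) (IsPGroup.iff_orderOf.mp hpG g0) Φ
end

section
/- Let G be a non-abelian finite p-group, K a normal subgroup of G, and L ≤ T subgroups of K with L normal in G, K/L isomorphic to C_p × C_p, T a non-normal subgroup of G with |K : T| = p. Then |G : N_G(T)| = p. -/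
open Subgroup Pointwise

/-- Two subgroups of prime order sharing a nontrivial element are equal. -/
lemma aux_line_eq {p : ℕ} (hp : p.Prime) {V : Type*} [Group V] [Finite V]
    {W₁ W₂ : Subgroup V} (h₁ : Nat.card W₁ = p) (h₂ : Nat.card W₂ = p)
    {v : V} (hv₁ : v ∈ W₁) (hv₂ : v ∈ W₂) (hv : v ≠ 1) : W₁ = W₂ := by
  have horder : orderOf v = p := by
    have hdvd : orderOf (⟨v, hv₁⟩ : W₁) ∣ Nat.card W₁ := orderOf_dvd_natCard _
    rw [Subgroup.orderOf_mk, h₁] at hdvd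
    rcases (Nat.Prime.eq_one_or_self_of_dvd hp _ hdvd) with h | h
    · exact absurd (orderOf_eq_one_iff.mp h) hv
    · exact h
  have key : ∀ (W : Subgroup V), v ∈ W → Nat.card W = p → W = Subgroup.zpowers v := by
    intro W hvW hW
    refine (Subgroup.eq_of_le_of_card_ge (Subgroup.zpowers_le.mpr hvW) ?_).symm
    rw [hW, Nat.card_zpowers, horder]
  rw [key W₁ hv₁ h₁, key W₂ hv₂ h₂]

lemma aux_smul_eq_map {G : Type*} [Group G] (a : MulAut G) (S : Subgroup G) :
    a • S = S.map a.toMonoidHom := by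
  ext x
  rw [Subgroup.mem_pointwise_smul_iff_inv_smul_mem]
  simp only [Subgroup.mem_map, MulEquiv.toMonoidHom_eq_coe, MonoidHom.coe_coe]
  constructor
  · intro h
    exact ⟨a⁻¹ • x, h, by simp [MulAut.smul_def, MulAut.inv_def]⟩
  · rintro ⟨y, hy, rfl⟩
    simpa [MulAut.smul_def, MulAut.inv_def] using hy

lemma aux_conj_smul_eq_iff {G : Type*} [Group G] (T : Subgroup G) (g : G) :
    MulAut.conj g • T = T ↔ g ∈ normalizer (T : Set G) := by
  have hmem : ∀ x : G, x ∈ MulAut.conj g • T ↔ g⁻¹ * x * g ∈ T := by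
    intro x
    rw [Subgroup.mem_pointwise_smul_iff_inv_smul_mem]
    simp [MulAut.smul_def, MulAut.inv_def, mul_assoc]
  rw [SetLike.ext_iff, Subgroup.mem_normalizer_iff'']
  simp only [hmem]
  exact ⟨fun h x => (h x).symm, fun h x => (h x).symm⟩

theorem stmt9 {G : Type*} [Group G] [Finite G] {p : ℕ} (hp : p.Prime)
    (hpG : IsPGroup p G) (hna : ¬ ∀ a b : G, a * b = b * a)
    (K L T : Subgroup G) [K.Normal] [L.Normal]
    (hLT : L ≤ T) (hTK : T ≤ K)
    (hquot : Nonempty ((K ⧸ L.subgroupOf K) ≃* Multiplicative (ZMod p × ZMod p)))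
    (hT : ¬ T.Normal) (hidx : (T.subgroupOf K).index = p) :
    (normalizer (T : Set G)).index = p := by
  classical
  obtain ⟨e⟩ := hquot
  haveI := Fact.mk hp
  set V := Multiplicative (ZMod p × ZMod p) with hV
  have hcardV : Nat.card V = p * p := by
    simp [hV, Nat.card_eq_fintype_card]
  -- basic facts about conjugates of T
  have hLconj : ∀ g : G, L ≤ MulAut.conj g • T := by
    intro g
    conv_lhs => rw [← Subgroup.Normal.conj_smul_eq_self g L]
    exact Subgroup.pointwise_smul_le_pointwise_smul_iff.mpr hLT
  have hKconj : ∀ g : G, MulAut.conj g • T ≤ K := by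
    intro g
    conv_rhs => rw [← Subgroup.Normal.conj_smul_eq_self g K]
    exact Subgroup.pointwise_smul_le_pointwise_smul_iff.mpr hTK
  -- index of conjugates inside K
  have hidxconj : ∀ g : G, ((MulAut.conj g • T).subgroupOf K).index = p := by
    intro g
    have hinj : Function.Injective (MulAut.conj g).toMonoidHom :=
      (MulAut.conj g).injective
    have h1 : Subgroup.comap (MulAut.conj g).toMonoidHom (MulAut.conj g • T) = T := by
      rw [aux_smul_eq_map, Subgroup.comap_map_eq_self_of_injective hinj]
    have h2 : Subgroup.map (MulAut.conj g).toMonoidHom K = K := by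
      rw [← aux_smul_eq_map, Subgroup.Normal.conj_smul_eq_self]
    have h3 := Subgroup.relIndex_comap (H := MulAut.conj g • T)
      (MulAut.conj g).toMonoidHom K
    rw [h1, h2] at h3
    have : (MulAut.conj g • T).relIndex K = p := by
      rw [← h3]; exact hidx
    exact this
  -- the "line" associated to a conjugate
  set mkQ := QuotientGroup.mk' (L.subgroupOf K) with hmkQ
  have hker : mkQ.ker = L.subgroupOf K := QuotientGroup.ker_mk' _
  set line : G → Subgroup V :=
    fun g => (((MulAut.conj g • T).subgroupOf K).map mkQ).map e.toMonoidHom with hline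
  have hkerle : ∀ g : G, mkQ.ker ≤ (MulAut.conj g • T).subgroupOf K := by
    intro g
    rw [hker]
    exact Subgroup.comap_mono (hLconj g)
  have hekert : (e.toMonoidHom).ker = ⊥ := (MonoidHom.ker_eq_bot_iff _).mpr e.injective
  have hlineidx : ∀ g : G, (line g).index = p := by
    intro g
    show ((((MulAut.conj g • T).subgroupOf K).map mkQ).map e.toMonoidHom).index = p
    rw [Subgroup.index_map_eq _ e.surjective (hekert ▸ bot_le),
      Subgroup.index_map_eq _ (QuotientGroup.mk'_surjective _) (hkerle g)]
    exact hidxconj g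
  have hlinecard : ∀ g : G, Nat.card (line g) = p := by
    intro g
    have h := Subgroup.card_mul_index (line g)
    rw [hlineidx g, hcardV] at h
    exact Nat.eq_of_mul_eq_mul_right hp.pos h
  -- injectivity of `line` modulo the normalizer
  have hlineinj : ∀ g₁ g₂ : G, line g₁ = line g₂ →
      MulAut.conj g₁ • T = MulAut.conj g₂ • T := by
    intro g₁ g₂ h
    have h1 : ((MulAut.conj g₁ • T).subgroupOf K).map mkQ
        = ((MulAut.conj g₂ • T).subgroupOf K).map mkQ :=
      Subgroup.map_injective e.injective h
    have h2 : (MulAut.conj g₁ • T).subgroupOf K = (MulAut.conj g₂ • T).subgroupOf K := by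
      have := congrArg (Subgroup.comap mkQ) h1
      rwa [Subgroup.comap_map_eq, Subgroup.comap_map_eq,
        sup_of_le_left (hkerle g₁), sup_of_le_left (hkerle g₂)] at this
    have h3 := congrArg (Subgroup.map K.subtype) h2
    rwa [Subgroup.subgroupOf_map_subtype, Subgroup.subgroupOf_map_subtype,
      inf_of_le_left (hKconj g₁), inf_of_le_left (hKconj g₂)] at h3
  -- picking a nontrivial element of each line
  have hpick : ∀ g : G, ∃ v : V, v ∈ line g ∧ v ≠ 1 := by
    intro g
    by_contra hcon
    push_neg at hcon
    have hbot : line g = ⊥ := by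
      rw [eq_bot_iff]
      intro x hx
      rw [Subgroup.mem_bot]
      exact hcon x hx
    have h := hlinecard g
    rw [hbot] at h
    have h1 : (1 : ℕ) = p := by simpa using h
    have := hp.one_lt
    omega
  choose pick hpickmem hpickne using hpick
  -- `pick` factors through a function depending only on `line g`
  set pick' : Subgroup V → V := fun W =>
    if h : ∃ v : V, v ∈ W ∧ v ≠ 1 then h.choose else 1 with hpick'
  have hpick'mem : ∀ g : G, pick' (line g) ∈ line g ∧ pick' (line g) ≠ 1 := by
    intro g
    have h : ∃ v : V, v ∈ line g ∧ v ≠ 1 := ⟨pick g, hpickmem g, hpickne g⟩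
    rw [hpick']
    simp only [dif_pos h]
    exact h.choose_spec
  -- the map on the quotient
  set N := normalizer (T : Set G) with hN
  have hwd : ∀ a b : G, @Setoid.r G (QuotientGroup.leftRel N) a b → pick' (line a) = pick' (line b) := by
    intro a b hab
    have hab' : a⁻¹ * b ∈ N := (QuotientGroup.leftRel_apply).mp hab
    have : MulAut.conj a • T = MulAut.conj b • T := by
      have h1 : MulAut.conj (a⁻¹ * b) • T = T := (aux_conj_smul_eq_iff T _).mpr hab'
      calc MulAut.conj a • T = MulAut.conj a • (MulAut.conj (a⁻¹ * b) • T) := by rw [h1]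
        _ = (MulAut.conj a * MulAut.conj (a⁻¹ * b)) • T := (mul_smul _ _ _).symm
        _ = MulAut.conj b • T := by rw [← map_mul]; simp
    have : line a = line b := by
      show (((MulAut.conj a • T).subgroupOf K).map mkQ).map e.toMonoidHom = _
      rw [this]
    rw [this]
  set Φ : G ⧸ N → V := Quotient.lift (fun g => pick' (line g)) hwd with hΦ
  have hΦmem : ∀ x : G ⧸ N, Φ x ≠ 1 := by
    intro x
    induction x using Quotient.ind with
    | _ g => exact (hpick'mem g).2
  have hΦinj : Function.Injective Φ := by
    intro x y hxy
    induction x using Quotient.ind with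
    | _ a =>
    induction y using Quotient.ind with
    | _ b =>
    have ha := hpick'mem a
    have hb := hpick'mem b
    have hxy' : pick' (line a) = pick' (line b) := hxy
    have hlineeq : line a = line b :=
      aux_line_eq hp (hlinecard a) (hlinecard b) ha.1 (hxy' ▸ hb.1) ha.2
    have hTeq := hlineinj a b hlineeq
    have h1 : MulAut.conj (a⁻¹ * b) • T = T := by
      calc MulAut.conj (a⁻¹ * b) • T
          = (MulAut.conj a⁻¹ * MulAut.conj b) • T := by rw [← map_mul]
        _ = MulAut.conj a⁻¹ • (MulAut.conj b • T) := mul_smul _ _ _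
        _ = MulAut.conj a⁻¹ • (MulAut.conj a • T) := by rw [hTeq]
        _ = (MulAut.conj a⁻¹ * MulAut.conj a) • T := (mul_smul _ _ _).symm
        _ = T := by rw [← map_mul]; simp
    exact Quotient.sound ((QuotientGroup.leftRel_apply).mpr ((aux_conj_smul_eq_iff T _).mp h1))
  -- counting
  have hcardlt : Nat.card (G ⧸ N) < p * p := by
    have hinj2 : Function.Injective (fun x : G ⧸ N => (⟨Φ x, hΦmem x⟩ : {v : V // v ≠ 1})) := by
      intro x y hxy
      exact hΦinj (congrArg Subtype.val hxy)
    calc Nat.card (G ⧸ N) ≤ Nat.card {v : V // v ≠ 1} :=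
          Nat.card_le_card_of_injective _ hinj2
      _ < Nat.card V := Finite.card_subtype_lt (x := (1 : V)) (by simp)
      _ = p * p := hcardV
  have hindexlt : N.index < p * p := by
    rwa [Subgroup.index_eq_card]
  -- the index is a power of p
  haveI : N.FiniteIndex := Subgroup.finiteIndex_of_finite_quotient (H := N)
  obtain ⟨n, hn⟩ := hpG.index N
  have hn1 : n = 1 := by
    have hne : n ≠ 0 := by
      intro h
      rw [h, pow_zero] at hn
      exact hT (Subgroup.normalizer_eq_top_iff.mp (Subgroup.index_eq_one.mp hn))
    have hlt : p ^ n < p ^ 2 := by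
      rw [pow_two]
      exact hn ▸ hindexlt
    have := (Nat.pow_lt_pow_iff_right hp.one_lt).mp hlt
    omega
  rw [hn, hn1, pow_one]
end

section
/- For every prime p and positive integer n, there exists a finite solvable group G with σ_n(G) = p^n + 1. Explicitly, the group G = H ⋊ ⟨b⟩, where H is the additive group of GF(p^n) and b acts as multiplication by a generator t of the multiplicative group GF(p^n)^×, satisfies σ_n(G) = p^n + 1. -/
open Subgroup

noncomputable section

section Generic

variable {G : Type*} [Group G]

lemma sigmaN_eq_of (k : ℕ) (s : Finset (Subgroup G)) (hs : IsNormCover s)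
    (hcard : s.card = k)
    (hlow : ∀ t : Finset (Subgroup G), IsNormCover t → k ≤ t.card) :
    sigmaN G = (k : ℕ∞) := by
  refine le_antisymm (sInf_le ⟨s, hs, by rw [hcard]⟩) (le_sInf ?_)
  rintro m ⟨t, ht, rfl⟩
  exact_mod_cast hlow t ht

lemma solvable_of_comm_ker {A : Type*} [CommGroup A] (f : G →* A)
    (h : ∀ x y : G, x ∈ f.ker → y ∈ f.ker → x * y = y * x) : IsSolvable G := by
  show Group.IsSolvable G
  rw [isSolvable_def]
  refine ⟨2, ?_⟩
  have h1 : derivedSeries G 1 ≤ f.ker := by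
    rw [derivedSeries_one]
    exact Abelianization.commutator_subset_ker f
  show derivedSeries G 2 = ⊥
  have : (2 : ℕ) = 1 + 1 := rfl
  rw [this, derivedSeries_succ, eq_bot_iff, Subgroup.commutator_le]
  intro g₁ hg₁ g₂ hg₂
  rw [Subgroup.mem_bot, commutatorElement_eq_one_iff_mul_comm]
  exact h g₁ g₂ (h1 hg₁) (h1 hg₂)

open Finset in
lemma card_lower_bound [Fintype G] [DecidableEq G]
    (s : Finset (Subgroup G)) (hs : IsNormCover s) (M : ℕ)
    (hM : ∀ L : Subgroup G, L ≠ ⊤ → Nat.card L ≤ M) :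
    Fintype.card G ≤ s.card * (M - 1) + 1 := by
  classical
  have hsub : (Finset.univ.erase (1 : G)) ⊆
      s.biUnion (fun L => (Finset.univ.filter (· ∈ (Subgroup.normalizer (L : Set G)))).erase 1) := by
    intro g hg
    rw [mem_erase] at hg
    obtain ⟨L, hL, hgL⟩ := hs.2 g
    exact mem_biUnion.2 ⟨L, hL, mem_erase.2 ⟨hg.1, mem_filter.2 ⟨mem_univ g, hgL⟩⟩⟩
  have hcard : ∀ L ∈ s, ((Finset.univ.filter (· ∈ (Subgroup.normalizer (L : Set G)))).erase (1:G)).card ≤ M - 1 := by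
    intro L hL
    have hne : (Subgroup.normalizer (L : Set G)) ≠ ⊤ := fun h => hs.1 L hL (Subgroup.normalizer_eq_top_iff.mp h)
    have h1 : Nat.card (Subgroup.normalizer (L : Set G)) ≤ M := hM _ hne
    have h2 : (Finset.univ.filter (· ∈ (Subgroup.normalizer (L : Set G)))).card = Nat.card (Subgroup.normalizer (L : Set G)) := by
      rw [Nat.card_eq_fintype_card, Fintype.card_subtype]
    have h3 : (1:G) ∈ Finset.univ.filter (· ∈ (Subgroup.normalizer (L : Set G))) :=
      mem_filter.2 ⟨mem_univ _, (Subgroup.normalizer (L : Set G)).one_mem⟩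
    rw [card_erase_of_mem h3, h2]
    omega
  have e1 : Fintype.card G = (Finset.univ.erase (1:G)).card + 1 := by
    rw [card_erase_of_mem (mem_univ _)]
    have : 0 < Fintype.card G := Fintype.card_pos
    simp [Finset.card_univ]
    omega
  have e2 : (Finset.univ.erase (1:G)).card ≤
      ∑ L ∈ s, ((Finset.univ.filter (· ∈ (Subgroup.normalizer (L : Set G)))).erase (1:G)).card :=
    le_trans (card_le_card hsub) card_biUnion_le
  have e3 : ∑ L ∈ s, ((Finset.univ.filter (· ∈ (Subgroup.normalizer (L : Set G)))).erase (1:G)).card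
      ≤ s.card * (M-1) := by
    calc _ ≤ ∑ _L ∈ s, (M-1) := Finset.sum_le_sum hcard
      _ = s.card * (M-1) := by rw [Finset.sum_const, smul_eq_mul]
  omega

end Generic
open Subgroup

@[ext]
structure Heis (m : ℕ) where
  a : ZMod m
  b : ZMod m
  c : ZMod m

namespace Heis

variable {m : ℕ}

instance : Mul (Heis m) := ⟨fun x y => ⟨x.a + y.a, x.b + y.b, x.c + y.c + x.a * y.b⟩⟩
instance : One (Heis m) := ⟨⟨0, 0, 0⟩⟩
instance : Inv (Heis m) := ⟨fun x => ⟨-x.a, -x.b, x.a * x.b - x.c⟩⟩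

@[simp] lemma mul_a (x y : Heis m) : (x * y).a = x.a + y.a := rfl
@[simp] lemma mul_b (x y : Heis m) : (x * y).b = x.b + y.b := rfl
@[simp] lemma mul_c (x y : Heis m) : (x * y).c = x.c + y.c + x.a * y.b := rfl
@[simp] lemma one_a : (1 : Heis m).a = 0 := rfl
@[simp] lemma one_b : (1 : Heis m).b = 0 := rfl
@[simp] lemma one_c : (1 : Heis m).c = 0 := rfl
@[simp] lemma inv_a (x : Heis m) : (x⁻¹).a = -x.a := rfl
@[simp] lemma inv_b (x : Heis m) : (x⁻¹).b = -x.b := rfl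
@[simp] lemma inv_c (x : Heis m) : (x⁻¹).c = x.a * x.b - x.c := rfl

instance : Group (Heis m) where
  mul_assoc x y z := by ext <;> simp <;> ring
  one_mul x := by ext <;> simp
  mul_one x := by ext <;> simp
  inv_mul_cancel x := by ext <;> simp

def equivProd : Heis m ≃ (ZMod m × ZMod m × ZMod m) where
  toFun x := (x.a, x.b, x.c)
  invFun x := ⟨x.1, x.2.1, x.2.2⟩
  left_inv _ := rfl
  right_inv _ := rfl

instance [NeZero m] : Fintype (Heis m) := Fintype.ofEquiv _ equivProd.symm

lemma card [NeZero m] : Fintype.card (Heis m) = m ^ 3 := by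
  rw [Fintype.card_congr equivProd]
  simp [ZMod.card]
  ring

lemma conj_eq (y g : Heis m) :
    y * g * y⁻¹ = ⟨g.a, g.b, g.c + y.a * g.b - g.a * y.b⟩ := by
  ext <;> simp <;> ring

/-- the projection to the abelianization-like quotient -/
def proj : Heis m →* Multiplicative (ZMod m × ZMod m) where
  toFun x := Multiplicative.ofAdd (x.a, x.b)
  map_one' := rfl
  map_mul' x y := rfl

instance : Group.IsSolvable (Heis m) := by
  refine solvable_of_comm_ker proj ?_
  intro x y hx hy
  rw [MonoidHom.mem_ker] at hx hy
  have hx1 : x.a = 0 ∧ x.b = 0 := by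
    have := congrArg (fun z => z.toAdd) hx
    exact ⟨congrArg Prod.fst this, congrArg Prod.snd this⟩
  have hy1 : y.a = 0 ∧ y.b = 0 := by
    have := congrArg (fun z => z.toAdd) hy
    exact ⟨congrArg Prod.fst this, congrArg Prod.snd this⟩
  ext <;> simp [hx1.1, hx1.2, hy1.1, hy1.2] <;> ring

end Heis
section HeisP

variable (p : ℕ) [hp : Fact p.Prime]

instance : NeZero (p ^ 2) := ⟨pow_ne_zero 2 hp.out.ne_zero⟩

omit hp in
lemma pp_eq_zero : (p : ZMod (p ^ 2)) * (p : ZMod (p ^ 2)) = 0 := by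
  rw [← Nat.cast_mul, ← pow_two, ZMod.natCast_self]

lemma p_ne_zero : (p : ZMod (p ^ 2)) ≠ 0 := by
  rw [Ne, ZMod.natCast_eq_zero_iff]
  intro h
  have h1 := Nat.le_of_dvd hp.out.pos h
  have h2 := hp.out.two_le
  nlinarith

lemma pmul_eq_zero_iff (w : ZMod (p ^ 2)) :
    (p : ZMod (p ^ 2)) * w = 0 ↔
      ZMod.castHom (dvd_pow_self p two_ne_zero) (ZMod p) w = 0 := by
  have hw : ((w.val : ℕ) : ZMod (p ^ 2)) = w := by
    rw [ZMod.natCast_val, ZMod.cast_id]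
  rw [ZMod.castHom_apply, ← ZMod.natCast_val, ZMod.natCast_eq_zero_iff]
  conv_lhs => rw [← hw, ← Nat.cast_mul]
  rw [ZMod.natCast_eq_zero_iff]
  generalize w.val = v
  rw [pow_two]
  exact Nat.mul_dvd_mul_iff_left hp.out.pos

/-- the subgroup of `Heis (p^2)` of elements `⟨pαz, pβz, 0⟩`. -/
def S (α β : ZMod (p ^ 2)) : Subgroup (Heis (p ^ 2)) where
  carrier := {g | ∃ z : ZMod (p ^ 2),
    g = ⟨(p : ZMod (p ^ 2)) * α * z, (p : ZMod (p ^ 2)) * β * z, 0⟩}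
  one_mem' := ⟨0, by ext <;> simp⟩
  mul_mem' := by
    rintro x y ⟨z, rfl⟩ ⟨z', rfl⟩
    refine ⟨z + z', ?_⟩
    have h0 := pp_eq_zero p
    ext <;> simp
    · ring
    · ring
    · linear_combination (α * z * β * z') * h0
  inv_mem' := by
    rintro x ⟨z, rfl⟩
    refine ⟨-z, ?_⟩
    have h0 := pp_eq_zero p
    ext <;> simp
    linear_combination (α * β * z ^ 2) * h0

lemma mem_S_iff (α β : ZMod (p ^ 2)) (g : Heis (p ^ 2)) :
    g ∈ S p α β ↔ ∃ z : ZMod (p ^ 2),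
      g = ⟨(p : ZMod (p ^ 2)) * α * z, (p : ZMod (p ^ 2)) * β * z, 0⟩ := Iff.rfl

lemma S_not_normal (α β γ δ : ZMod (p ^ 2)) (h : γ * β - α * δ = 1) :
    ¬ (S p α β).Normal := by
  intro hN
  have hx : (⟨(p : ZMod (p ^ 2)) * α, (p : ZMod (p ^ 2)) * β, 0⟩ : Heis (p ^ 2)) ∈ S p α β :=
    ⟨1, by ext <;> simp⟩
  have h2 := hN.conj_mem _ hx ⟨γ, δ, 0⟩
  rw [Heis.conj_eq] at h2
  obtain ⟨z, hz⟩ := h2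
  have h3 := congrArg Heis.c hz
  simp at h3
  have : (p : ZMod (p ^ 2)) = 0 := by linear_combination h3 - (p : ZMod (p ^ 2)) * h
  exact p_ne_zero p this

lemma mem_normalizer_S (α β : ZMod (p ^ 2)) (g : Heis (p ^ 2))
    (h : (p : ZMod (p ^ 2)) * (g.a * β - g.b * α) = 0) :
    g ∈ (Subgroup.normalizer ((S p α β) : Set (Heis (p ^ 2)))) := by
  rw [Subgroup.mem_normalizer_iff]
  intro x
  constructor
  · rintro ⟨z, rfl⟩
    refine ⟨z, ?_⟩
    rw [Heis.conj_eq]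
    ext <;> simp
    linear_combination z * h
  · intro hx
    rw [Heis.conj_eq] at hx
    obtain ⟨z, hz⟩ := hx
    have ha := congrArg Heis.a hz
    have hb := congrArg Heis.b hz
    have hc := congrArg Heis.c hz
    simp at ha hb hc
    refine ⟨z, ?_⟩
    ext <;> simp [ha, hb]
    linear_combination hc - g.a * hb + g.b * ha - z * h

end HeisP
section HeisP2

variable (p : ℕ) [hp : Fact p.Prime]

local notation "κ" => ZMod.castHom (dvd_pow_self p two_ne_zero) (ZMod p)

lemma kappa_val (t : ZMod p) : κ ((t.val : ℕ) : ZMod (p ^ 2)) = t := by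
  rw [map_natCast, ZMod.natCast_val, ZMod.cast_id]

lemma S_inj : Function.Injective
    (fun t : ZMod p => S p 1 ((t.val : ℕ) : ZMod (p ^ 2))) := by
  intro t t' h
  simp only at h
  have hmem : (⟨(p : ZMod (p ^ 2)) * 1 * 1,
      (p : ZMod (p ^ 2)) * ((t.val : ℕ) : ZMod (p ^ 2)) * 1, 0⟩ :
      Heis (p ^ 2)) ∈ S p 1 ((t.val : ℕ) : ZMod (p ^ 2)) := ⟨1, rfl⟩
  rw [h] at hmem
  obtain ⟨z, hz⟩ := hmem
  have h1 := congrArg Heis.a hz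
  have h2 := congrArg Heis.b hz
  simp only at h1 h2
  have e1 : (p : ZMod (p ^ 2)) * (1 - z) = 0 := by linear_combination h1
  have e2 : (p : ZMod (p ^ 2)) *
      (((t.val : ℕ) : ZMod (p ^ 2)) - ((t'.val : ℕ) : ZMod (p ^ 2)) * z) = 0 := by
    linear_combination h2
  rw [pmul_eq_zero_iff, map_sub, map_one] at e1
  rw [pmul_eq_zero_iff, map_sub, map_mul, kappa_val, kappa_val] at e2
  have hz1 : κ z = 1 := by linear_combination -e1
  rw [hz1, mul_one] at e2
  exact sub_eq_zero.mp e2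

lemma S01_ne (t : ZMod p) : S p 1 ((t.val : ℕ) : ZMod (p ^ 2)) ≠ S p 0 1 := by
  intro h
  have hmem : (⟨(p : ZMod (p ^ 2)) * 1 * 1,
      (p : ZMod (p ^ 2)) * ((t.val : ℕ) : ZMod (p ^ 2)) * 1, 0⟩ :
      Heis (p ^ 2)) ∈ S p 1 ((t.val : ℕ) : ZMod (p ^ 2)) := ⟨1, rfl⟩
  rw [h] at hmem
  obtain ⟨z, hz⟩ := hmem
  have h1 := congrArg Heis.a hz
  simp only at h1
  exact p_ne_zero p (by linear_combination h1)

/-- The covering family for `Heis (p^2)`. -/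
def coverS : Finset (Subgroup (Heis (p ^ 2))) :=
  (Finset.univ.map ⟨_, S_inj p⟩).cons (S p 0 1)
    (by
      simp only [Finset.mem_map, not_exists]
      intro t h
      exact S01_ne p t ((h.2).symm ▸ rfl))

lemma coverS_card : (coverS p).card = p + 1 := by
  rw [coverS, Finset.card_cons, Finset.card_map, Finset.card_univ, ZMod.card]

lemma coverS_isNormCover : IsNormCover (coverS p) := by
  constructor
  · intro H hH
    rw [coverS, Finset.mem_cons] at hH
    rcases hH with h | h
    · rw [h]
      exact S_not_normal p 0 1 1 0 (by ring)
    · obtain ⟨t, _, rfl⟩ := Finset.mem_map.mp h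
      exact S_not_normal p 1 _ 0 (-1) (by ring)
  · intro g
    by_cases hA : κ g.a = 0
    · refine ⟨S p 0 1, by rw [coverS]; exact Finset.mem_cons_self _ _, ?_⟩
      apply mem_normalizer_S
      have h0 : (p : ZMod (p ^ 2)) * g.a = 0 := (pmul_eq_zero_iff p g.a).mpr hA
      linear_combination h0
    · set t0 : ZMod p := κ g.b * (κ g.a)⁻¹ with ht0
      refine ⟨S p 1 ((t0.val : ℕ) : ZMod (p ^ 2)),
        by rw [coverS]
           exact Finset.mem_cons_of_mem (Finset.mem_map.mpr ⟨t0, Finset.mem_univ _, rfl⟩), ?_⟩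
      apply mem_normalizer_S
      rw [pmul_eq_zero_iff, mul_one, map_sub, map_mul, kappa_val, ht0]
      rw [mul_comm (κ g.a), mul_assoc, inv_mul_cancel₀ hA, mul_one, sub_self]

lemma heis_card : Fintype.card (Heis (p ^ 2)) = p ^ 6 := by
  rw [Heis.card]; ring

lemma heis_lower (t : Finset (Subgroup (Heis (p ^ 2)))) (ht : IsNormCover t) :
    p + 1 ≤ t.card := by
  classical
  have hM : ∀ L : Subgroup (Heis (p ^ 2)), L ≠ ⊤ → Nat.card L ≤ p ^ 5 := by
    intro L hL
    have hG : Nat.card (Heis (p ^ 2)) = p ^ 6 := by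
      rw [Nat.card_eq_fintype_card, heis_card]
    have hdvd : Nat.card L ∣ p ^ 6 := hG ▸ Subgroup.card_subgroup_dvd_card L
    obtain ⟨i, hi, hcard⟩ := (Nat.dvd_prime_pow hp.out).mp hdvd
    have hi5 : i ≤ 5 := by
      rcases Nat.lt_or_ge i 6 with h | h
      · omega
      · exfalso
        have hi6 : i = 6 := by omega
        apply hL
        apply Subgroup.eq_top_of_card_eq
        rw [hG, hcard, hi6]
    rw [hcard]
    exact Nat.pow_le_pow_right hp.out.pos hi5
  have key := card_lower_bound t ht (p ^ 5) hM
  rw [heis_card] at key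
  by_contra hlt
  push_neg at hlt
  have h1 : t.card * (p ^ 5 - 1) ≤ p * (p ^ 5 - 1) :=
    Nat.mul_le_mul_right _ (by omega)
  have h5 : 1 ≤ p ^ 5 := Nat.one_le_pow _ _ hp.out.pos
  have h2 : 2 ≤ p := hp.out.two_le
  zify [h5] at key h1
  nlinarith [key, h1]

theorem sigmaN_heis : sigmaN (Heis (p ^ 2)) = ((p + 1 : ℕ) : ℕ∞) :=
  sigmaN_eq_of (p + 1) (coverS p) (coverS_isNormCover p) (coverS_card p) (heis_lower p)

end HeisP2
section AGL

variable (p n : ℕ) [hp : Fact p.Prime]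

@[ext]
structure Aff (p n : ℕ) [Fact p.Prime] where
  h : GaloisField p n
  u : (GaloisField p n)ˣ

namespace Aff

variable {p n}

instance : Mul (Aff p n) := ⟨fun x y => ⟨x.h + x.u * y.h, x.u * y.u⟩⟩
instance : One (Aff p n) := ⟨⟨0, 1⟩⟩
instance : Inv (Aff p n) := ⟨fun x => ⟨-((x.u⁻¹ : _) * x.h), x.u⁻¹⟩⟩

@[simp] lemma mul_h (x y : Aff p n) : (x * y).h = x.h + x.u * y.h := rfl
@[simp] lemma mul_u (x y : Aff p n) : (x * y).u = x.u * y.u := rfl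
@[simp] lemma one_h : (1 : Aff p n).h = 0 := rfl
@[simp] lemma one_u : (1 : Aff p n).u = 1 := rfl
@[simp] lemma inv_h (x : Aff p n) : (x⁻¹).h = -((x.u⁻¹ : _) * x.h) := rfl
@[simp] lemma inv_u (x : Aff p n) : (x⁻¹).u = x.u⁻¹ := rfl

instance : Group (Aff p n) where
  mul_assoc x y z := by
    ext <;> simp <;> ring

  one_mul x := by ext <;> simp
  mul_one x := by ext <;> simp
  inv_mul_cancel x := by
    ext <;> simp

def equivProd : Aff p n ≃ (GaloisField p n × (GaloisField p n)ˣ) where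
  toFun x := (x.h, x.u)
  invFun x := ⟨x.1, x.2⟩
  left_inv _ := rfl
  right_inv _ := rfl

instance : Finite (Aff p n) := Finite.of_equiv _ equivProd.symm

/-- projection to the (abelian) unit group -/
def proj : Aff p n →* (GaloisField p n)ˣ where
  toFun x := x.u
  map_one' := rfl
  map_mul' _ _ := rfl

instance : Group.IsSolvable (Aff p n) := by
  refine solvable_of_comm_ker proj ?_
  intro x y hx hy
  rw [MonoidHom.mem_ker] at hx hy
  have hx' : x.u = 1 := hx
  have hy' : y.u = 1 := hy
  ext <;> simp [hx', hy'] <;> ring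

end Aff

variable {p n}

/-- the stabilizer of the point `x` in the affine action -/
def St (x : GaloisField p n) : Subgroup (Aff p n) where
  carrier := {g | g.h = x - (g.u : GaloisField p n) * x}
  one_mem' := by simp
  mul_mem' := by
    intro a b ha hb
    simp only [Set.mem_setOf_eq, Aff.mul_h, Aff.mul_u, Units.val_mul] at *
    rw [ha, hb]
    ring
  inv_mem' := by
    intro a ha
    simp only [Set.mem_setOf_eq, Aff.inv_h, Aff.inv_u, Units.val_inv_eq_inv_val] at *
    rw [ha]
    have h0 : (a.u : GaloisField p n) ≠ 0 := a.u.ne_zero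
    field_simp
    ring

lemma mem_St_iff (x : GaloisField p n) (g : Aff p n) :
    g ∈ St x ↔ g.h = x - (g.u : GaloisField p n) * x := Iff.rfl

/-- the `𝔽_p`-line of translations -/
def lineW : Subgroup (Aff p n) where
  carrier := {g | g.u = 1 ∧ ∃ c : ZMod p, g.h = algebraMap (ZMod p) (GaloisField p n) c}
  one_mem' := ⟨rfl, 0, by simp⟩
  mul_mem' := by
    rintro a b ⟨ha1, ca, ha2⟩ ⟨hb1, cb, hb2⟩
    refine ⟨by simp [ha1, hb1], ca + cb, ?_⟩
    show a.h + _ * b.h = _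
    rw [ha1, ha2, hb2, map_add]
    simp
  inv_mem' := by
    rintro a ⟨ha1, ca, ha2⟩
    refine ⟨by simp [ha1], -ca, ?_⟩
    show -(((a.u⁻¹ : _) : GaloisField p n) * a.h) = _
    rw [ha1, ha2, map_neg]
    simp

lemma mem_lineW_iff (g : Aff p n) :
    g ∈ lineW ↔ g.u = 1 ∧ ∃ c : ZMod p, g.h = algebraMap (ZMod p) (GaloisField p n) c :=
  Iff.rfl

end AGL
section AGL2

variable {p n : ℕ} [hp : Fact p.Prime]

lemma conj_u (g a : Aff p n) : (g * a * g⁻¹).u = a.u := by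
  simp only [Aff.mul_u, Aff.inv_u]
  rw [mul_comm g.u a.u, mul_assoc, mul_inv_cancel, mul_one]

lemma conj_h (g a : Aff p n) :
    (g * a * g⁻¹).h = g.h + (g.u : GaloisField p n) * a.h - (a.u : GaloisField p n) * g.h := by
  simp only [Aff.mul_h, Aff.mul_u, Aff.inv_h, Aff.inv_u, Units.val_mul,
    Units.val_inv_eq_inv_val]
  have h0 : (g.u : GaloisField p n) ≠ 0 := g.u.ne_zero
  field_simp
  ring

lemma normal_of_forall_trans (L : Subgroup (Aff p n))
    (hL : ∀ v : GaloisField p n, (⟨v, 1⟩ : Aff p n) ∈ L) : L.Normal := by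
  constructor
  intro l hl g
  have hmu : (g * l * g⁻¹).u = l.u := conj_u g l
  have he : g * l * g⁻¹ = (⟨(g * l * g⁻¹).h - l.h, 1⟩ : Aff p n) * l := by
    ext <;> simp [hmu]
  rw [he]
  exact L.mul_mem (hL _) hl

lemma trans_all (L : Subgroup (Aff p n)) (t : (GaloisField p n)ˣ)
    (ht : ∀ x : (GaloisField p n)ˣ, x ∈ Subgroup.zpowers t) {h₀ : GaloisField p n}
    (hN : (⟨h₀, t⟩ : Aff p n) ∈ (Subgroup.normalizer (L : Set (Aff p n)))) {w : GaloisField p n} (hw : w ≠ 0)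
    (hwL : (⟨w, 1⟩ : Aff p n) ∈ L) : ∀ v : GaloisField p n, (⟨v, 1⟩ : Aff p n) ∈ L := by
  have step1 : ∀ v : GaloisField p n,
      (⟨v, 1⟩ : Aff p n) ∈ L → (⟨(t : GaloisField p n) * v, 1⟩ : Aff p n) ∈ L := by
    intro v hv
    have hc := (Subgroup.mem_normalizer_iff.mp hN ⟨v, 1⟩).mp hv
    have he : (⟨h₀, t⟩ : Aff p n) * ⟨v, 1⟩ * (⟨h₀, t⟩ : Aff p n)⁻¹ =
        (⟨(t : GaloisField p n) * v, 1⟩ : Aff p n) := by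
      ext
      · rw [conj_h]; simp
      · rw [conj_u]
    rwa [he] at hc
  have step2 : ∀ (m : ℕ) (v : GaloisField p n),
      (⟨v, 1⟩ : Aff p n) ∈ L → (⟨(t : GaloisField p n) ^ m * v, 1⟩ : Aff p n) ∈ L := by
    intro m
    induction m with
    | zero => intro v hv; simpa using hv
    | succ m ih =>
        intro v hv
        have h2 := step1 _ (ih v hv)
        rw [show (t : GaloisField p n) * ((t : GaloisField p n) ^ m * v)
          = (t : GaloisField p n) ^ (m + 1) * v by ring] at h2
        exact h2
  intro v
  rcases eq_or_ne v 0 with rfl | hv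
  · have h1 : (⟨(0 : GaloisField p n), 1⟩ : Aff p n) = 1 := by ext <;> simp
    rw [h1]; exact L.one_mem
  · have hvw : v * w⁻¹ ≠ 0 := by
      apply mul_ne_zero hv
      exact inv_ne_zero hw
    obtain ⟨k, hk⟩ := Subgroup.mem_zpowers_iff.mp (ht (Units.mk0 _ hvw))
    have hord : 0 < orderOf t := orderOf_pos t
    have hm : t ^ (k % (orderOf t : ℤ)).toNat = Units.mk0 _ hvw := by
      rw [← zpow_natCast, Int.toNat_of_nonneg (Int.emod_nonneg k (by exact_mod_cast hord.ne'))]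
      rw [zpow_mod_orderOf]
      exact hk
    have h3 := step2 (k % (orderOf t : ℤ)).toNat w hwL
    have hval : (t : GaloisField p n) ^ (k % (orderOf t : ℤ)).toNat * w = v := by
      have h4 : ((t ^ (k % (orderOf t : ℤ)).toNat : (GaloisField p n)ˣ) : GaloisField p n)
          = v * w⁻¹ := by rw [hm]; rfl
      rw [Units.val_pow_eq_pow_val] at h4
      rw [h4]
      field_simp
    rwa [hval] at h3

lemma norm_sub_st (L : Subgroup (Aff p n))
    (htriv : ∀ v : GaloisField p n, (⟨v, 1⟩ : Aff p n) ∈ L → v = 0) {g₀ : Aff p n}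
    (hg₀ : g₀ ∈ L) (hs : g₀.u ≠ 1) {g : Aff p n} (hg : g ∈ (Subgroup.normalizer (L : Set (Aff p n)))) :
    g ∈ St ((1 - (g₀.u : GaloisField p n))⁻¹ * g₀.h) := by
  have hconj : g * g₀ * g⁻¹ ∈ L := (Subgroup.mem_normalizer_iff.mp hg g₀).mp hg₀
  have hu : (g * g₀ * g⁻¹).u = g₀.u := conj_u g g₀
  have h2 : (g * g₀ * g⁻¹) * g₀⁻¹ ∈ L := L.mul_mem hconj (L.inv_mem hg₀)
  have h3 : ((g * g₀ * g⁻¹) * g₀⁻¹).u = 1 := by simp [hu]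
  have h4 : (⟨((g * g₀ * g⁻¹) * g₀⁻¹).h, 1⟩ : Aff p n) = (g * g₀ * g⁻¹) * g₀⁻¹ := by
    ext <;> simp [h3]
  have h5 : ((g * g₀ * g⁻¹) * g₀⁻¹).h = 0 := htriv _ (by rw [h4]; exact h2)
  have h6 : g * g₀ * g⁻¹ = g₀ := by
    have h7 : (g * g₀ * g⁻¹) * g₀⁻¹ = 1 := by ext <;> simp [h5, h3]
    calc g * g₀ * g⁻¹ = ((g * g₀ * g⁻¹) * g₀⁻¹) * g₀ := by group
      _ = g₀ := by rw [h7]; exact one_mul g₀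
  have h7 := congrArg Aff.h h6
  rw [conj_h] at h7
  rw [mem_St_iff]
  have hs' : (1 : GaloisField p n) - (g₀.u : GaloisField p n) ≠ 0 := by
    rw [sub_ne_zero]
    intro e
    exact hs (Units.val_eq_one.mp e.symm)
  have hinv : ((1 : GaloisField p n) - (g₀.u : GaloisField p n))
      * ((1 : GaloisField p n) - (g₀.u : GaloisField p n))⁻¹ = 1 := mul_inv_cancel₀ hs'
  linear_combination ((1 - (g₀.u : GaloisField p n))⁻¹) * h7 - g.h * hinv

lemma St_inj {t : (GaloisField p n)ˣ} (ht1 : (t : GaloisField p n) ≠ 1) :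
    Function.Injective (St (p := p) (n := n)) := by
  intro x y hxy
  have hmem : (⟨x - (t : GaloisField p n) * x, t⟩ : Aff p n) ∈ St x := by rw [mem_St_iff]
  rw [hxy, mem_St_iff] at hmem
  have h1 : ((1 : GaloisField p n) - (t : GaloisField p n)) * (x - y) = 0 := by
    linear_combination hmem
  rcases mul_eq_zero.mp h1 with h | h
  · exact absurd (by linear_combination -h) ht1
  · exact sub_eq_zero.mp h

lemma St_not_normal {t : (GaloisField p n)ˣ} (ht1 : (t : GaloisField p n) ≠ 1)
    (x : GaloisField p n) : ¬ (St x).Normal := by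
  intro hN
  have hmem : (⟨x - (t : GaloisField p n) * x, t⟩ : Aff p n) ∈ St x := by rw [mem_St_iff]
  have h2 := hN.conj_mem _ hmem ⟨1, 1⟩
  rw [mem_St_iff, conj_h, conj_u] at h2
  simp only [Units.val_one] at h2
  apply ht1
  linear_combination -h2

lemma mem_norm_lineW {g : Aff p n} (hgu : g.u = 1) : g ∈ (Subgroup.normalizer ((lineW (p := p) (n := n)) : Set (Aff p n))) := by
  rw [Subgroup.mem_normalizer_iff]
  intro m
  constructor
  · rintro ⟨hm1, c, hc⟩
    refine ⟨by rw [conj_u]; exact hm1, c, ?_⟩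
    rw [conj_h, hgu, hm1, hc]
    simp
  · rintro ⟨hm1, c, hc⟩
    rw [conj_u] at hm1
    rw [conj_h, hgu, hm1] at hc
    refine ⟨hm1, c, ?_⟩
    simp only [Units.val_one, one_mul] at hc
    linear_combination hc

end AGL2
theorem sigmaN_agl (p n : ℕ) [hp : Fact p.Prime] (hn2 : 2 ≤ n) :
    sigmaN (Aff p n) = ((p ^ n + 1 : ℕ) : ℕ∞) := by
  classical
  haveI : Fintype (GaloisField p n) := Fintype.ofFinite _
  obtain ⟨t, ht⟩ := IsCyclic.exists_generator (α := (GaloisField p n)ˣ)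
  have hq4 : 4 ≤ p ^ n := by
    calc (4:ℕ) = 2 ^ 2 := rfl
      _ ≤ p ^ 2 := Nat.pow_le_pow_left hp.out.two_le 2
      _ ≤ p ^ n := Nat.pow_le_pow_right hp.out.pos hn2
  have hqp : p < p ^ n := by
    conv_lhs => rw [← pow_one p]
    exact Nat.pow_lt_pow_right hp.out.one_lt (by omega)
  have hcardF : Nat.card (GaloisField p n) = p ^ n := GaloisField.card p n (by omega)
  have hFcard : Fintype.card (GaloisField p n) = p ^ n := by
    rw [← Nat.card_eq_fintype_card, hcardF]
  have hcardU : Nat.card (GaloisField p n)ˣ = p ^ n - 1 := by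
    rw [Nat.card_units, hcardF]
  have hord : orderOf t = p ^ n - 1 := by
    rw [orderOf_eq_card_of_forall_mem_zpowers ht, hcardU]
  have ht1 : (t : GaloisField p n) ≠ 1 := by
    intro h
    have h2 : t = 1 := Units.val_eq_one.mp h
    rw [h2, orderOf_one] at hord
    omega
  -- upper bound: the covering family
  have hlineW_notin : lineW (p := p) (n := n) ∉ Finset.univ.map ⟨St, St_inj ht1⟩ := by
    intro hmem
    obtain ⟨x, -, hx⟩ := Finset.mem_map.mp hmem
    simp only [Function.Embedding.coeFn_mk] at hx
    have h1 : (⟨(1 : GaloisField p n), 1⟩ : Aff p n) ∈ lineW := ⟨rfl, 1, by simp⟩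
    rw [← hx, mem_St_iff] at h1
    simp only [Units.val_one, one_mul] at h1
    exact one_ne_zero (by linear_combination h1 : (1 : GaloisField p n) = 0)
  set cover : Finset (Subgroup (Aff p n)) :=
    (Finset.univ.map ⟨St, St_inj ht1⟩).cons lineW hlineW_notin with hcov
  have hcovcard : cover.card = p ^ n + 1 := by
    rw [hcov, Finset.card_cons, Finset.card_map, Finset.card_univ, hFcard]
  have hcovnc : IsNormCover cover := by
    constructor
    · intro H hH
      rw [hcov, Finset.mem_cons] at hH
      rcases hH with h | h
      · rw [h]
        intro hN
        have hmem : (⟨(1 : GaloisField p n), 1⟩ : Aff p n) ∈ lineW := ⟨rfl, 1, by simp⟩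
        have h2 := hN.conj_mem _ hmem ⟨0, t⟩
        have he : (⟨0, t⟩ : Aff p n) * ⟨1, 1⟩ * (⟨0, t⟩ : Aff p n)⁻¹
            = (⟨(t : GaloisField p n), 1⟩ : Aff p n) := by
          ext
          · rw [conj_h]; simp
          · rw [conj_u]
        rw [he] at h2
        obtain ⟨-, c, hc⟩ := h2
        have hc' : (t : GaloisField p n) = algebraMap (ZMod p) (GaloisField p n) c := hc
        have hc0 : c ≠ 0 := by
          rintro rfl
          rw [map_zero] at hc'
          exact t.ne_zero hc'
        have hpow : ((t : GaloisField p n)) ^ (p - 1) = 1 := by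
          rw [hc', ← map_pow, ZMod.pow_card_sub_one_eq_one hc0, map_one]
        have htp : t ^ (p - 1) = 1 :=
          Units.ext (by rw [Units.val_pow_eq_pow_val, hpow, Units.val_one])
        have hdvd : orderOf t ∣ p - 1 := orderOf_dvd_of_pow_eq_one htp
        rw [hord] at hdvd
        have hle : p ^ n - 1 ≤ p - 1 :=
          Nat.le_of_dvd (by have := hp.out.two_le; omega) hdvd
        omega
      · obtain ⟨x, -, rfl⟩ := Finset.mem_map.mp h
        exact St_not_normal ht1 x
    · intro g
      by_cases hgu : g.u = 1
      · exact ⟨lineW, by rw [hcov]; exact Finset.mem_cons_self _ _, mem_norm_lineW hgu⟩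
      · refine ⟨St ((1 - (g.u : GaloisField p n))⁻¹ * g.h),
          by rw [hcov]
             exact Finset.mem_cons_of_mem (Finset.mem_map.mpr ⟨_, Finset.mem_univ _, rfl⟩), ?_⟩
        apply Subgroup.le_normalizer
        rw [mem_St_iff]
        have hu1 : (1 : GaloisField p n) - (g.u : GaloisField p n) ≠ 0 := by
          rw [sub_ne_zero]
          intro e
          exact hgu (Units.val_eq_one.mp e.symm)
        have hinv := mul_inv_cancel₀ hu1
        linear_combination (-g.h) * hinv
  -- lower bound
  have hlow : ∀ s : Finset (Subgroup (Aff p n)), IsNormCover s → p ^ n + 1 ≤ s.card := by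
    intro s hs
    choose f hf1 hf2 using hs.2
    have key : ∀ x : GaloisField p n,
        ∀ v : GaloisField p n,
          (⟨v, 1⟩ : Aff p n) ∈ f ⟨x - (t : GaloisField p n) * x, t⟩ → v = 0 := by
      intro x v hv
      by_contra hv0
      have h1 := trans_all (f ⟨x - (t : GaloisField p n) * x, t⟩) t ht
        (hf2 ⟨x - (t : GaloisField p n) * x, t⟩) hv0 hv
      exact absurd (normal_of_forall_trans _ h1) (hs.1 _ (hf1 _))
    have key2 : ∀ x : GaloisField p n,
        ∃ g₀ ∈ f ⟨x - (t : GaloisField p n) * x, t⟩, g₀.u ≠ 1 := by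
      intro x
      by_contra hcon
      push_neg at hcon
      have hbot : f ⟨x - (t : GaloisField p n) * x, t⟩ = ⊥ := by
        rw [Subgroup.eq_bot_iff_forall]
        intro l hl
        have hu : l.u = 1 := hcon l hl
        have hl' : (⟨l.h, 1⟩ : Aff p n) ∈ f ⟨x - (t : GaloisField p n) * x, t⟩ := by
          have he : (⟨l.h, 1⟩ : Aff p n) = l := by ext <;> simp [hu]
          rw [he]; exact hl
        have h0 := key x l.h hl'
        ext <;> simp [h0, hu]
      apply hs.1 _ (hf1 (⟨x - (t : GaloisField p n) * x, t⟩ : Aff p n))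
      rw [hbot]
      infer_instance
    have key3 : ∀ x : GaloisField p n, ∀ gg : Aff p n,
        gg ∈ (Subgroup.normalizer ((f ⟨x - (t : GaloisField p n) * x, t⟩) : Set (Aff p n))) → gg ∈ St x := by
      intro x gg hgg
      obtain ⟨g₀, hg₀, hg₀u⟩ := key2 x
      have h1 := norm_sub_st _ (key x) hg₀ hg₀u hgg
      have h2 := norm_sub_st _ (key x) hg₀ hg₀u (hf2 ⟨x - (t : GaloisField p n) * x, t⟩)
      rw [mem_St_iff] at h2
      simp only at h2
      have hx0 : (1 - (g₀.u : GaloisField p n))⁻¹ * g₀.h = x := by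
        have h3 : ((1 : GaloisField p n) - (t : GaloisField p n)) *
            ((1 - (g₀.u : GaloisField p n))⁻¹ * g₀.h - x) = 0 := by
          linear_combination -h2
        rcases mul_eq_zero.mp h3 with h | h
        · exact absurd (by linear_combination -h) ht1
        · exact sub_eq_zero.mp h
      rw [hx0] at h1
      exact h1
    have hinj : Function.Injective
        (fun x : GaloisField p n => f ⟨x - (t : GaloisField p n) * x, t⟩) := by
      intro x y hxy
      simp only at hxy
      have h1 : (⟨x - (t : GaloisField p n) * x, t⟩ : Aff p n) ∈ St y := by
        apply key3 y
        rw [← hxy]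
        exact hf2 _
      rw [mem_St_iff] at h1
      simp only at h1
      have h3 : ((1 : GaloisField p n) - (t : GaloisField p n)) * (x - y) = 0 := by
        linear_combination h1
      rcases mul_eq_zero.mp h3 with h | h
      · exact absurd (by linear_combination -h) ht1
      · exact sub_eq_zero.mp h
    have hL'ne : ∀ x : GaloisField p n,
        f (⟨(1 : GaloisField p n), 1⟩ : Aff p n) ≠ f ⟨x - (t : GaloisField p n) * x, t⟩ := by
      intro x he
      have h1 : (⟨(1 : GaloisField p n), 1⟩ : Aff p n) ∈ St x := by
        apply key3 x
        rw [← he]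
        exact hf2 _
      rw [mem_St_iff] at h1
      simp only [Units.val_one, one_mul] at h1
      exact one_ne_zero (by linear_combination h1 : (1 : GaloisField p n) = 0)
    have hnotin : f (⟨(1 : GaloisField p n), 1⟩ : Aff p n) ∉
        Finset.univ.map ⟨fun x : GaloisField p n => f ⟨x - (t : GaloisField p n) * x, t⟩, hinj⟩ := by
      intro hmem
      obtain ⟨x, -, hx⟩ := Finset.mem_map.mp hmem
      exact hL'ne x hx.symm
    calc p ^ n + 1 = ((Finset.univ.map
          ⟨fun x : GaloisField p n => f ⟨x - (t : GaloisField p n) * x, t⟩, hinj⟩).cons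
            (f (⟨(1 : GaloisField p n), 1⟩ : Aff p n)) hnotin).card := by
          rw [Finset.card_cons, Finset.card_map, Finset.card_univ, hFcard]
      _ ≤ s.card := by
          apply Finset.card_le_card
          intro H hH
          rw [Finset.mem_cons] at hH
          rcases hH with h | h
          · rw [h]; exact hf1 _
          · obtain ⟨x, -, rfl⟩ := Finset.mem_map.mp h
            exact hf1 _
  exact sigmaN_eq_of _ cover hcovnc hcovcard hlow

theorem stmt15 {p : ℕ} (hp : p.Prime) {n : ℕ} (hn : 0 < n) :
    ∃ (G : Type) (_ : Group G) (_ : Finite G), IsSolvable G ∧ sigmaN G = p ^ n + 1 := by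
  haveI : Fact p.Prime := ⟨hp⟩
  rcases eq_or_lt_of_le (show 1 ≤ n from hn) with h1 | h2
  · -- n = 1 : use the Heisenberg group mod p²
    refine ⟨Heis (p ^ 2), inferInstance, inferInstance, (inferInstance : Group.IsSolvable _), ?_⟩
    rw [sigmaN_heis p, ← h1]
    push_cast
    ring
  · -- n ≥ 2 : use the affine group of GF(p^n)
    refine ⟨Aff p n, inferInstance, inferInstance, (inferInstance : Group.IsSolvable _), ?_⟩
    rw [sigmaN_agl p n h2]
    push_cast
    ring

end
end

section
/- For the dihedral group D_{2n} of order 2n with n > 2, every element of order n lies in no proper normalizer of a subgroup; consequently D_{2n} has no normalizer covering, i.e., σ_n(D_{2n}) = ∞. -/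
open Subgroup

lemma r_pow_aux {n : ℕ} (i : ZMod n) (m : ℕ) :
    (DihedralGroup.r i) ^ m = DihedralGroup.r (m • i) := by
  induction m with
  | zero => simp
  | succ m ih => rw [pow_succ, ih, DihedralGroup.r_mul_r, succ_nsmul]

lemma r_inv_aux {n : ℕ} (a : ZMod n) :
    (DihedralGroup.r a)⁻¹ = DihedralGroup.r (-a) := by
  apply inv_eq_of_mul_eq_one_right
  rw [DihedralGroup.r_mul_r]
  simp

lemma sr_inv_aux {n : ℕ} (a : ZMod n) :
    (DihedralGroup.sr a)⁻¹ = DihedralGroup.sr a :=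
  inv_eq_of_mul_eq_one_right (DihedralGroup.sr_mul_self a)

theorem stmt17 {n : ℕ} (hn : 2 < n) :
    (∀ x : DihedralGroup n, orderOf x = n →
      ∀ H : Subgroup (DihedralGroup n), x ∈ Subgroup.normalizer (H : Set (DihedralGroup n)) → H.Normal) ∧
    sigmaN (DihedralGroup n) = ⊤ := by
  haveI : NeZero n := ⟨by omega⟩
  have main : ∀ x : DihedralGroup n, orderOf x = n →
      ∀ H : Subgroup (DihedralGroup n), x ∈ Subgroup.normalizer (H : Set (DihedralGroup n)) → H.Normal := by
    intro x hx H hxH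
    cases x with
    | sr i => rw [DihedralGroup.orderOf_sr] at hx; omega
    | r i =>
      rw [DihedralGroup.orderOf_r] at hx
      have hg : 0 < Nat.gcd n i.val := Nat.pos_of_ne_zero (by
        intro h0; rw [h0] at hx; simp at hx; omega)
      have hcop : Nat.gcd n i.val = 1 := by
        have h1 : n / Nat.gcd n i.val * Nat.gcd n i.val = n :=
          Nat.div_mul_cancel (Nat.gcd_dvd_left n i.val)
        rw [hx] at h1
        by_contra hne
        have : 2 ≤ Nat.gcd n i.val := by omega
        nlinarith
      have hu : IsUnit i := by
        have hcop' : Nat.Coprime i.val n := by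
          unfold Nat.Coprime; rw [Nat.gcd_comm]; exact hcop
        have := (ZMod.unitOfCoprime i.val hcop').isUnit
        rwa [ZMod.coe_unitOfCoprime, ZMod.natCast_val, ZMod.cast_id] at this
      have hgen : ∀ j : ZMod n, DihedralGroup.r j ∈ Subgroup.normalizer (H : Set (DihedralGroup n)) := by
        intro j
        obtain ⟨u, hu'⟩ := hu
        have : DihedralGroup.r j = (DihedralGroup.r i) ^ ((j * (u⁻¹ : (ZMod n)ˣ)).val) := by
          rw [r_pow_aux]
          congr 1
          rw [nsmul_eq_mul, ZMod.natCast_val, ZMod.cast_id]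
          rw [mul_assoc, ← hu']
          simp
        rw [this]
        exact pow_mem hxH _
      by_cases hsr : ∃ a, DihedralGroup.sr a ∈ H
      · rw [← Subgroup.normalizer_eq_top_iff, eq_top_iff]
        intro g _
        cases g with
        | r j => exact hgen j
        | sr j =>
          obtain ⟨a, ha⟩ := hsr
          have ha' : DihedralGroup.sr a ∈ Subgroup.normalizer (H : Set (DihedralGroup n)) := Subgroup.le_normalizer ha
          have : DihedralGroup.sr j = DihedralGroup.r (a - j) * DihedralGroup.sr a := by
            rw [DihedralGroup.r_mul_sr]; ring_nf
          rw [this]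
          exact mul_mem (hgen _) ha'
      · push_neg at hsr
        constructor
        intro h hh g
        cases h with
        | sr a => exact absurd hh (hsr a)
        | r a =>
          cases g with
          | r j =>
            have : DihedralGroup.r j * DihedralGroup.r a * (DihedralGroup.r j)⁻¹
                = DihedralGroup.r a := by
              rw [r_inv_aux, DihedralGroup.r_mul_r, DihedralGroup.r_mul_r]
              ring_nf
            rw [this]; exact hh
          | sr j =>
            have : DihedralGroup.sr j * DihedralGroup.r a * (DihedralGroup.sr j)⁻¹
                = (DihedralGroup.r a)⁻¹ := by
              rw [sr_inv_aux, DihedralGroup.sr_mul_r, DihedralGroup.sr_mul_sr, r_inv_aux]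
              ring_nf
            rw [this]; exact inv_mem hh
  refine ⟨main, ?_⟩
  unfold sigmaN
  convert sInf_empty
  · rfl
  rw [Set.eq_empty_iff_forall_notMem]
  rintro m ⟨s, ⟨hns, hcov⟩, -⟩
  obtain ⟨H, hHs, hHmem⟩ := hcov (DihedralGroup.r 1)
  exact hns H hHs (main _ (DihedralGroup.orderOf_r_one) H hHmem)
end

section
/- Let G be a finite p-group with p odd, and suppose there is an element x ∈ G such that every subgroup of G normalized by x is normal in G. If u ∈ G satisfies [u,x] ≠ 1, then the subgroup T = ⟨x⟩⟨u⟩ satisfies [x,u] ∈ ⟨x^p⟩, and consequently ⟨x^p⟩⟨u⟩ is a normal subgroup of G. -/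
open Subgroup
open scoped commutatorElement

theorem stmt19 {G : Type*} [Group G] [Finite G] {p : ℕ} (hp : p.Prime) (hodd : Odd p)
    (hpG : IsPGroup p G) (x : G)
    (hx : ∀ H : Subgroup G, x ∈ normalizer (H : Set G) → H.Normal)
    (u : G) (hu : ⁅u, x⁆ ≠ 1) :
    ⁅x, u⁆ ∈ zpowers (x ^ p) ∧ (zpowers (x ^ p) ⊔ zpowers u).Normal := by
  haveI : Fact p.Prime := ⟨hp⟩
  have hxne : x ≠ 1 := by
    rintro rfl; exact hu (by simp [commutatorElement_def])
  have hxx : (zpowers x).Normal := hx _ (le_normalizer (mem_zpowers x))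
  obtain ⟨k, hk⟩ := mem_zpowers_iff.mp (hxx.conj_mem x (mem_zpowers x) u)
  -- hk : x ^ k = u * x * u⁻¹
  obtain ⟨s, hs⟩ := hpG u
  have hiter : ∀ m : ℕ, u ^ m * x * (u ^ m)⁻¹ = x ^ (k ^ m) := by
    intro m
    induction m with
    | zero => simp
    | succ m ih =>
      have h1 : u ^ (m + 1) * x * (u ^ (m + 1))⁻¹ = u * (u ^ m * x * (u ^ m)⁻¹) * u⁻¹ := by
        group
      rw [h1, ih, ← conj_zpow, ← hk, ← zpow_mul, pow_succ, mul_comm]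
  -- order of x is divisible by p
  have hdvd1 : (p : ℤ) ∣ k ^ (p ^ s) - 1 := by
    have hx1 : x ^ (k ^ (p ^ s) - 1) = 1 := by
      have := hiter (p ^ s)
      rw [hs] at this
      simp only [one_mul, inv_one, mul_one] at this
      rw [zpow_sub, ← this, zpow_one, mul_inv_cancel]
    have hord : (orderOf x : ℤ) ∣ k ^ (p ^ s) - 1 := orderOf_dvd_iff_zpow_eq_one.mpr hx1
    obtain ⟨n, hn⟩ := hpG x
    obtain ⟨j, hj, hje⟩ := (Nat.dvd_prime_pow hp).mp (orderOf_dvd_of_pow_eq_one hn)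
    have hj0 : j ≠ 0 := by
      rintro rfl
      simp at hje
      exact hxne hje
    have : p ∣ orderOf x := hje ▸ dvd_pow_self p hj0
    exact dvd_trans (Int.natCast_dvd_natCast.mpr this) hord
  have hk1 : (p : ℤ) ∣ k - 1 := by
    have h0 : ((k ^ (p ^ s) - 1 : ℤ) : ZMod p) = 0 :=
      (ZMod.intCast_zmod_eq_zero_iff_dvd _ p).mpr hdvd1
    push_cast at h0
    rw [ZMod.pow_card_pow, sub_eq_zero] at h0
    rw [← ZMod.intCast_zmod_eq_zero_iff_dvd]
    push_cast
    rw [h0, sub_self]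
  obtain ⟨t, ht⟩ := hk1
  have hxp : ∀ a : ℤ, (p : ℤ) ∣ a → x ^ a ∈ zpowers (x ^ p) := by
    rintro a ⟨c, rfl⟩
    refine ⟨c, ?_⟩
    show (x ^ p) ^ c = x ^ ((p : ℤ) * c)
    rw [← zpow_natCast x p, ← zpow_mul]
  have hcomm : ⁅x, u⁆ = x ^ (1 - k) := by
    have : ⁅x, u⁆ = x * (u * x * u⁻¹)⁻¹ := by group
    rw [this, ← hk, zpow_sub, zpow_one]
  have hmem : ⁅x, u⁆ ∈ zpowers (x ^ p) := by
    rw [hcomm]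
    exact hxp _ (by rw [show (1 : ℤ) - k = -(k - 1) by ring]; exact Dvd.dvd.neg_right ⟨t, ht⟩)
  refine ⟨hmem, ?_⟩
  set H : Subgroup G := zpowers (x ^ p) ⊔ zpowers u with hH
  have hHc : H = Subgroup.closure ({x ^ p, u} : Set G) := by
    rw [hH, zpowers_eq_closure, zpowers_eq_closure, ← Subgroup.closure_union,
      Set.singleton_union]
  have hle : zpowers (x ^ p) ≤ H := le_sup_left
  have huH : u ∈ H := Subgroup.mem_sup_right (mem_zpowers u)
  have hconj : ∀ g : G, g * (x ^ p) * g⁻¹ = x ^ p → g * u * g⁻¹ ∈ H →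
      ∀ h ∈ H, g * h * g⁻¹ ∈ H := by
    intro g hg1 hg2 h hh
    rw [hHc] at hh ⊢
    induction hh using Subgroup.closure_induction with
    | mem y hy =>
      rcases hy with rfl | rfl
      · rw [hg1]; exact Subgroup.subset_closure (Set.mem_insert _ _)
      · rw [← hHc]; exact hg2
    | one => simpa using Subgroup.one_mem _
    | mul y z hy hz ihy ihz =>
      have : g * (y * z) * g⁻¹ = (g * y * g⁻¹) * (g * z * g⁻¹) := by group
      rw [this]; exact Subgroup.mul_mem _ ihy ihz
    | inv y hy ihy =>
      have : g * y⁻¹ * g⁻¹ = (g * y * g⁻¹)⁻¹ := by group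
      rw [this]; exact Subgroup.inv_mem _ ihy
  have hA : ∀ h ∈ H, x * h * x⁻¹ ∈ H := by
    refine hconj x (by group) ?_
    have : x * u * x⁻¹ = ⁅x, u⁆ * u := by group
    rw [this]
    exact H.mul_mem (hle hmem) huH
  have hB : ∀ h ∈ H, x⁻¹ * h * x ∈ H := by
    have := hconj x⁻¹ (by group) ?_
    · simpa using this
    · have h1 : x⁻¹ * u * x⁻¹⁻¹ = x⁻¹ * x ^ k * u := by
        rw [hk]; group
      have h2 : x⁻¹ * x ^ k = x ^ (k - 1) := by
        rw [← zpow_neg_one, ← zpow_add]; ring_nf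
      rw [h1, h2]
      exact H.mul_mem (hle (hxp _ ⟨t, ht⟩)) huH
  refine hx H (mem_normalizer_iff.mpr fun h => ⟨fun hh => hA h hh, fun hh => ?_⟩)
  have := hB _ hh
  simpa [mul_assoc] using this
end
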